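/- arXiv:math/0409258 — 6 statements merged into one kernel-verified Lean document; each statement's English description precedes it below -/
import Mathlib

section
/- For any complex-valued functions G_1, ..., G_k on (0,1], squarefree integers r_1, ..., r_k with r = lcm(r_1,...,r_k), such that every prime dividing r divides at least two of the r_i, we have |∑ G_1(b_1/r_1)⋯G_k(b_k/r_k)| ≤ (1/r) ∏_{i=1}^k (r_i ∑_{b_i=1}^{r_i} |G_i(b_i/r_i)|²)^{1/2}, where the outer sum is over tuples (b_1,...,b_k) with 1 ≤ b_i ≤ r_i and b_1/r_1 + ⋯ + b_k/r_k ∈ ℤ. -/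
/-!
Write `R = lcm rᵢ` and `e = ZMod.stdAddChar`. Detecting `∑ bᵢ/rᵢ ∈ ℤ` by the characters modulo `R`
turns the sum into `R⁻¹ ∑_{h mod R} ∏ᵢ Sᵢ(h mod rᵢ)` with `Sᵢ(y) = ∑_{b ≤ rᵢ} e(y b) Gᵢ(b/rᵢ)`, and
Parseval gives `∑_{y mod rᵢ} |Sᵢ(y)|² = rᵢ ∑_b |Gᵢ(b/rᵢ)|²`. It remains to bound
`∑_{h mod R} ∏ᵢ aᵢ(h mod rᵢ)` by `∏ᵢ ‖aᵢ‖₂` for nonnegative `aᵢ`. Split off a prime `p ∣ R` by the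
Chinese remainder theorem: for a fixed residue modulo `R/p`, at least two factors run bijectively
over the residues modulo `p`, so Cauchy–Schwarz on those two, and the bound `sup ≤ ‖·‖₂` on the
others, replace every `aᵢ` by its `ℓ²` norm along the fibres modulo `p`, which is a function modulo
`rᵢ` with `p` removed; induction on `R` finishes.
-/

open Finset ZMod

theorem Nat.squarefree_lcm {a b : ℕ} (ha : Squarefree a) (hb : Squarefree b) :
    Squarefree (a.lcm b) := by
  rw [Nat.squarefree_iff_factorization_le_one (Nat.lcm_ne_zero ha.ne_zero hb.ne_zero),
    Nat.factorization_lcm ha.ne_zero hb.ne_zero]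
  exact fun p => sup_le ((Nat.squarefree_iff_factorization_le_one ha.ne_zero).mp ha p)
    ((Nat.squarefree_iff_factorization_le_one hb.ne_zero).mp hb p)

theorem Finset.squarefree_lcm {ι : Type*} (s : Finset ι) {r : ι → ℕ}
    (hr : ∀ i ∈ s, Squarefree (r i)) : Squarefree (s.lcm r) := by
  classical
  induction s using Finset.induction_on with
  | empty => exact squarefree_one
  | insert a s ha ih =>
    rw [lcm_insert]
    exact Nat.squarefree_lcm (hr a (mem_insert_self a s))
      (ih fun i hi => hr i (mem_insert_of_mem hi))

theorem le_sqrt_sum_sq {V : Type*} [Fintype V] (F : V → ℝ) (w : V) :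
    F w ≤ √(∑ v, F v ^ 2) :=
  (le_abs_self _).trans (Real.abs_le_sqrt (single_le_sum (fun v _ => sq_nonneg (F v)) (mem_univ w)))

theorem sum_prod_le_prod_sqrt_sum_sq {ι U : Type*} [Fintype ι] [Fintype U]
    {V : ι → Type*} [∀ i, Fintype (V i)] (φ : ∀ i, U → V i) (F : ∀ i, V i → ℝ)
    (hF : ∀ i w, 0 ≤ F i w) {j k : ι} (hjk : j ≠ k) (hj : (φ j).Bijective)
    (hk : (φ k).Bijective) :
    ∑ u, ∏ i, F i (φ i u) ≤ ∏ i, √(∑ w, F i w ^ 2) := by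
  classical
  set B : ι → ℝ := fun i => √(∑ w, F i w ^ 2)
  set rest := (univ.erase j).erase k
  have split (c : ι → ℝ) : ∏ i, c i = c j * c k * ∏ i ∈ rest, c i := by
    rw [mul_assoc, mul_prod_erase _ _ (mem_erase.2 ⟨hjk.symm, mem_univ k⟩),
      mul_prod_erase _ _ (mem_univ j)]
  have hB (i : ι) (hi : (φ i).Bijective) : √(∑ u, F i (φ i u) ^ 2) = B i := by
    rw [hi.sum_comp (fun w => F i w ^ 2)]
  calc ∑ u, ∏ i, F i (φ i u)
      ≤ ∑ u, F j (φ j u) * F k (φ k u) * ∏ i ∈ rest, B i := by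
        gcongr with u
        rw [split]
        exact mul_le_mul_of_nonneg_left
          (prod_le_prod (fun i _ => hF i _) fun i _ => le_sqrt_sum_sq (F i) _)
          (mul_nonneg (hF j _) (hF k _))
    _ = (∑ u, F j (φ j u) * F k (φ k u)) * ∏ i ∈ rest, B i := (sum_mul ..).symm
    _ ≤ B j * B k * ∏ i ∈ rest, B i := by
        gcongr
        rw [← hB j hj, ← hB k hk]
        exact Real.sum_mul_le_sqrt_mul_sqrt _ _ _
    _ = ∏ i, B i := (split B).symm

theorem ZMod.ringHom_ringEquiv_symm_apply {n : ℕ} {A B : Type*} [NonAssocSemiring A]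
    [NonAssocSemiring B] (e : ZMod n ≃+* A) (f : ZMod n →+* B) (g : A →+* B) (a : A) :
    f (e.symm a) = g a := by
  rw [RingHom.ext_zmod f (g.comp e.toRingHom)]
  simp

theorem sum_sq_sqrt_sum_sq_fiber {A B C : Type*} [Fintype A] [Fintype B] [Fintype C]
    (e : A ≃ B × C) (f : A → ℝ) :
    ∑ w, √(∑ u, f (e.symm (u, w)) ^ 2) ^ 2 = ∑ y, f y ^ 2 := by
  simp only [Real.sq_sqrt (sum_nonneg fun _ _ => sq_nonneg _)]
  rw [sum_comm, ← Fintype.sum_prod_type']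
  exact Fintype.sum_equiv e.symm _ _ fun _ => rfl

theorem sum_prod_castHom_le_prod_sqrt_sum_sq {ι : Type*} [Fintype ι] (R : ℕ) [NeZero R]
    (hR : Squarefree R) (s : ι → ℕ) [∀ i, NeZero (s i)] (hs : ∀ i, s i ∣ R)
    (hcov : ∀ p, p.Prime → p ∣ R → 1 < #{i | p ∣ s i})
    (f : ∀ i, ZMod (s i) → ℝ) (hf : ∀ i y, 0 ≤ f i y) :
    ∑ x : ZMod R, ∏ i, f i (castHom (hs i) _ x) ≤ ∏ i, √(∑ y, f i y ^ 2) := by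
  revert ‹NeZero R›
  induction R using Nat.strong_induction_on generalizing s with
  | _ R ih =>
  intro
  rcases eq_or_ne R 1 with rfl | hR1
  · rw [Fintype.sum_unique]
    exact prod_le_prod (fun i _ => hf i _) fun i _ => le_sqrt_sum_sq (f i) _
  obtain ⟨p, hp, m, rfl⟩ := Nat.exists_prime_and_dvd hR1
  have hpm : p.Coprime m := Nat.coprime_of_squarefree_mul hR
  have : NeZero p := ⟨hp.ne_zero⟩
  have : NeZero m := ⟨right_ne_zero_of_mul (NeZero.ne (p * m))⟩
  choose g t hgp htm hst using fun i => exists_dvd_and_dvd_of_dvd_mul (hs i)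
  have : ∀ i, NeZero (g i) := fun i => ⟨left_ne_zero_of_mul (hst i ▸ NeZero.ne (s i))⟩
  have : ∀ i, NeZero (t i) := fun i => ⟨right_ne_zero_of_mul (hst i ▸ NeZero.ne (s i))⟩
  have hgt (i : ι) : (g i).Coprime (t i) :=
    (hpm.coprime_dvd_left (hgp i)).coprime_dvd_right (htm i)
  let e := ZMod.chineseRemainder hpm
  let e' (i : ι) : ZMod (s i) ≃+* ZMod (g i) × ZMod (t i) :=
    (ZMod.ringEquivCongr (hst i)).trans (ZMod.chineseRemainder (hgt i))
  have hcast (i : ι) (u : ZMod p) (v : ZMod m) : castHom (hs i) _ (e.symm (u, v)) =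
      (e' i).symm (castHom (hgp i) _ u, castHom (htm i) _ v) :=
    ZMod.ringHom_ringEquiv_symm_apply e _
      (((e' i).symm : ZMod (g i) × ZMod (t i) →+* ZMod (s i)).comp
        ((castHom (hgp i) _).prodMap (castHom (htm i) _))) (u, v)
  have hbij (i : ι) (hi : p ∣ s i) : Function.Bijective (castHom (hgp i) (ZMod (g i))) := by
    have hgi : g i = p := by
      refine ((Nat.dvd_prime hp).mp (hgp i)).resolve_left fun hg1 => ?_
      rw [hst i, hg1, one_mul] at hi
      exact (Nat.Prime.coprime_iff_not_dvd hp).mp hpm (hi.trans (htm i))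
    rw [Fintype.bijective_iff_surjective_and_card]
    exact ⟨ZMod.castHom_surjective _, by rw [ZMod.card, ZMod.card, hgi]⟩
  obtain ⟨j, hj, k, hk, hjk⟩ := Finset.one_lt_card.mp (hcov p hp (dvd_mul_right p m))
  rw [mem_filter] at hj hk
  let f' (i : ι) (w : ZMod (t i)) : ℝ := √(∑ u, f i ((e' i).symm (u, w)) ^ 2)
  have hcov' (q : ℕ) (hq : q.Prime) (hqm : q ∣ m) : 1 < #{i | q ∣ t i} := by
    have hqg (i : ι) : q.Coprime (g i) :=
      (hpm.symm.coprime_dvd_left hqm).coprime_dvd_right (hgp i)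
    convert hcov q hq (dvd_mul_of_dvd_right hqm p) using 3 with i
    rw [hst i]
    exact ⟨fun h => dvd_mul_of_dvd_right h _, (hqg i).dvd_of_dvd_mul_left⟩
  calc ∑ x : ZMod (p * m), ∏ i, f i (castHom (hs i) _ x)
      = ∑ v : ZMod m, ∑ u : ZMod p,
          ∏ i, f i ((e' i).symm (castHom (hgp i) _ u, castHom (htm i) _ v)) := by
        rw [← e.symm.toEquiv.sum_comp, Fintype.sum_prod_type, sum_comm]
        simp only [RingEquiv.toEquiv_eq_coe, EquivLike.coe_coe, hcast]
    _ ≤ ∑ v : ZMod m, ∏ i, f' i (castHom (htm i) _ v) :=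
        sum_le_sum fun v _ => sum_prod_le_prod_sqrt_sum_sq (fun i => castHom (hgp i) _)
          (fun i w => f i ((e' i).symm (w, castHom (htm i) _ v))) (fun i w => hf i _) hjk
          (hbij j hj.2) (hbij k hk.2)
    _ ≤ ∏ i, √(∑ w, f' i w ^ 2) :=
        ih m (lt_mul_left (Nat.pos_of_neZero m) hp.one_lt) hR.of_mul_right t htm hcov' f'
          fun i w => Real.sqrt_nonneg _
    _ = ∏ i, √(∑ y, f i y ^ 2) :=
        prod_congr rfl fun i _ => congrArg Real.sqrt (sum_sq_sqrt_sum_sq_fiber (e' i).toEquiv (f i))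

theorem sum_norm_sq_sum_stdAddChar_mul {N : ℕ} [NeZero N] {ι : Type*} (s : Finset ι)
    (c : ι → ZMod N) (hc : Set.InjOn c s) (g : ι → ℂ) :
    ∑ y : ZMod N, ‖∑ j ∈ s, stdAddChar (y * c j) * g j‖ ^ 2 = N * ∑ j ∈ s, ‖g j‖ ^ 2 := by
  have orth (j l : ι) : ∑ y : ZMod N, stdAddChar (y * c j) * g j *
      (stdAddChar (-(y * c l)) * starRingEnd ℂ (g l)) =
        if c j = c l then N * (g j * starRingEnd ℂ (g l)) else 0 := by
    simp_rw [mul_mul_mul_comm _ (g j), ← AddChar.map_add_eq_mul, ← sub_eq_add_neg, ← mul_sub]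
    rw [← sum_mul, AddChar.sum_mulShift _ (isPrimitive_stdAddChar N)]
    simp only [sub_eq_zero, ZMod.card, Nat.cast_ite, CharP.cast_eq_zero, ite_mul, zero_mul]
  apply Complex.ofReal_injective
  push_cast
  simp_rw [← Complex.mul_conj', map_sum, map_mul, ← AddChar.map_neg_eq_conj, sum_mul_sum,
    mul_sum]
  rw [sum_comm]
  refine sum_congr rfl fun j hj => ?_
  rw [sum_comm, sum_eq_single_of_mem j hj, orth, if_pos rfl]
  intro l hl hlj
  rw [orth, if_neg fun h => hlj (hc hl hj h.symm)]

theorem AddChar.map_sum_eq_prod {A M ι : Type*} [AddCommMonoid A] [CommMonoid M]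
    (ψ : AddChar A M) (s : Finset ι) (f : ι → A) : ψ (∑ i ∈ s, f i) = ∏ i ∈ s, ψ (f i) := by
  induction s using Finset.cons_induction with
  | empty => rw [sum_empty, prod_empty, map_zero_eq_one]
  | cons a s ha ih => rw [sum_cons, prod_cons, map_add_eq_mul, ih]

theorem ZMod.stdAddChar_castHom {n R : ℕ} [NeZero n] [NeZero R] (h : n ∣ R) (x : ZMod R) :
    stdAddChar (castHom h (ZMod n) x) = stdAddChar (x * ((R / n : ℕ) : ZMod R)) := by
  obtain ⟨j, rfl⟩ := ZMod.intCast_surjective x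
  rw [map_intCast, ← Int.cast_natCast (R / n), ← Int.cast_mul, stdAddChar_coe, stdAddChar_coe]
  congr 1
  have hn : (n : ℂ) ≠ 0 := NeZero.ne _
  have hR : (R : ℂ) ≠ 0 := NeZero.ne _
  rw [Int.cast_mul, Int.cast_natCast, Nat.cast_div h hn]
  field_simp

theorem sum_prod_stdAddChar_castHom {ι : Type*} [Fintype ι] {R : ℕ} [NeZero R] (r : ι → ℕ)
    [∀ i, NeZero (r i)] (hr : ∀ i, r i ∣ R) (b : ι → ℕ) :
    ∑ x : ZMod R, ∏ i, stdAddChar (castHom (hr i) (ZMod (r i)) x * (b i : ZMod (r i))) =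
      if (∑ i, (b i : ℚ) / r i).den = 1 then (R : ℂ) else 0 := by
  set M := ∑ i, b i * (R / r i)
  have hM : (∑ i, (b i : ℚ) / r i) = M / R := by
    rw [Nat.cast_sum, sum_div]
    refine sum_congr rfl fun i _ => ?_
    have hri : (r i : ℚ) ≠ 0 := NeZero.ne _
    have hR : (R : ℚ) ≠ 0 := NeZero.ne _
    rw [Nat.cast_mul, Nat.cast_div (hr i) hri]
    field_simp
  have hψ (x : ZMod R) (i : ι) : stdAddChar (castHom (hr i) (ZMod (r i)) x * (b i : ZMod (r i))) =
      stdAddChar (x * ((b i * (R / r i) : ℕ) : ZMod R)) := by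
    rw [← map_natCast (castHom (hr i) (ZMod (r i))) (b i), ← map_mul, stdAddChar_castHom,
      Nat.cast_mul, mul_assoc]
  simp_rw [hψ, ← AddChar.map_sum_eq_prod, ← mul_sum, ← Nat.cast_sum]
  simp only [AddChar.sum_mulShift _ (isPrimitive_stdAddChar R), hM,
    Rat.den_div_natCast_eq_one_iff _ _ (NeZero.ne R), ZMod.natCast_eq_zero_iff, ZMod.card,
    Nat.cast_ite, Nat.cast_zero, M]

theorem sum_piFinset_filter_den_eq_one {ι : Type*} [Fintype ι] [DecidableEq ι] {R : ℕ} [NeZero R]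
    (r : ι → ℕ) [∀ i, NeZero (r i)] (hr : ∀ i, r i ∣ R) (t : ι → Finset ℕ) (g : ι → ℕ → ℂ) :
    ∑ b ∈ (Fintype.piFinset t).filter (fun b => (∑ i, (b i : ℚ) / r i).den = 1), ∏ i, g i (b i) =
      (R : ℂ)⁻¹ * ∑ x : ZMod R, ∏ i, ∑ c ∈ t i,
        stdAddChar (castHom (hr i) (ZMod (r i)) x * (c : ZMod (r i))) * g i c := by
  have hR : (R : ℂ) ≠ 0 := NeZero.ne _
  calc _ = ∑ b ∈ Fintype.piFinset t, (R : ℂ)⁻¹ *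
        ((∑ x : ZMod R, ∏ i, stdAddChar (castHom (hr i) (ZMod (r i)) x * (b i : ZMod (r i)))) *
          ∏ i, g i (b i)) := by
        rw [sum_filter]
        refine sum_congr rfl fun b _ => ?_
        rw [sum_prod_stdAddChar_castHom r hr b]
        split_ifs <;> simp [hR]
    _ = (R : ℂ)⁻¹ * ∑ x : ZMod R, ∑ b ∈ Fintype.piFinset t,
          ∏ i, stdAddChar (castHom (hr i) (ZMod (r i)) x * (b i : ZMod (r i))) * g i (b i) := by
        simp_rw [← mul_sum, sum_mul, prod_mul_distrib]
        rw [sum_comm]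
    _ = _ := by simp_rw [prod_univ_sum]

theorem ZMod.injOn_natCast_Icc (n : ℕ) : Set.InjOn (Nat.cast : ℕ → ZMod n) (Icc 1 n) := by
  intro a ha b hb hab
  rw [coe_Icc, Set.mem_Icc] at ha hb
  exact ((ZMod.natCast_eq_natCast_iff _ _ _).mp hab).eq_of_abs_lt (by rw [abs_lt]; omega)

/-- Montgomery–Vaughan basic inequality (Lemma 1). -/
theorem stmt_0 (k : ℕ) (r : Fin k → ℕ) (hsf : ∀ i, Squarefree (r i))
    (hpos : ∀ i, 0 < r i)
    (hp : ∀ p : ℕ, p.Prime → p ∣ Finset.univ.lcm r →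
      1 < (Finset.univ.filter (fun i => p ∣ r i)).card)
    (G : Fin k → ℝ → ℂ) :
    ‖∑ b ∈ (Fintype.piFinset fun i => Finset.Icc 1 (r i)).filter
        (fun b => (∑ i, (b i : ℚ) / (r i : ℚ)).den = 1),
      ∏ i, G i ((b i : ℝ) / (r i : ℝ))‖ ≤
    (1 / ((Finset.univ.lcm r : ℕ) : ℝ)) *
      ∏ i, ((r i : ℝ) * ∑ b ∈ Finset.Icc 1 (r i), ‖G i ((b : ℝ) / (r i : ℝ))‖ ^ 2)
        ^ ((1 : ℝ) / 2) := by
  set R := univ.lcm r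
  have hr (i : Fin k) : r i ∣ R := dvd_lcm (mem_univ i)
  have hR : Squarefree R := univ.squarefree_lcm fun i _ => hsf i
  have : NeZero R := ⟨hR.ne_zero⟩
  have : ∀ i, NeZero (r i) := fun i => ⟨(hpos i).ne'⟩
  set S : ∀ i, ZMod (r i) → ℂ := fun i y =>
    ∑ c ∈ Icc 1 (r i), stdAddChar (y * (c : ZMod (r i))) * G i ((c : ℝ) / r i)
  have hS (i : Fin k) : ∑ y, ‖S i y‖ ^ 2 = r i * ∑ c ∈ Icc 1 (r i), ‖G i ((c : ℝ) / r i)‖ ^ 2 :=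
    sum_norm_sq_sum_stdAddChar_mul _ _ (ZMod.injOn_natCast_Icc (r i)) _
  calc _ = (R : ℝ)⁻¹ * ‖∑ x : ZMod R, ∏ i, S i (castHom (hr i) _ x)‖ := by
        rw [sum_piFinset_filter_den_eq_one r hr _ fun i c => G i ((c : ℝ) / r i), norm_mul,
          norm_inv, Complex.norm_natCast]
    _ ≤ (R : ℝ)⁻¹ * ∑ x : ZMod R, ∏ i, ‖S i (castHom (hr i) _ x)‖ := by
        gcongr
        exact (norm_sum_le _ _).trans_eq (sum_congr rfl fun x _ => norm_prod _ _)
    _ ≤ (R : ℝ)⁻¹ * ∏ i, √(∑ y, ‖S i y‖ ^ 2) := by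
        gcongr
        exact sum_prod_castHom_le_prod_sqrt_sum_sq R hR r hr hp (fun i y => ‖S i y‖)
          fun i y => norm_nonneg _
    _ = _ := by simp_rw [hS, Real.sqrt_eq_rpow, one_div]
end

section
/- Let q_1, ..., q_k be squarefree integers each greater than 1, d = lcm(q_1,...,q_k), G : (0,1) → ℂ, and G_0 a nondecreasing function on positive integers such that ∑_{a=1}^{q-1} |G(a/q)|² ≤ q·G_0(q) for all squarefree q > 1. Then |∑ ∏_{i=1}^k G(a_i/q_i)| ≤ (1/d) ∏_{i=1}^k q_i·G_0(q_i)^{1/2}, where the sum is over tuples (a_1,...,a_k) with 0 < a_i < q_i and ∑ a_i/q_i ∈ ℤ. -/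
/-!
Write `xᵢ = aᵢ / qᵢ`, a point of `qᵢ⁻¹ℤ / ℤ`. If `∑ xᵢ ∈ ℤ`, then `xᵢ` is an integer minus the other
`xⱼ`, so its denominator divides `gcd (qᵢ, ∏_{j ≠ i} qⱼ)`; replacing every `qᵢ` by this shared part
leaves the sum unchanged and can only decrease `∏ qᵢ / lcm q`. Afterwards every prime `p ∣ d`
divides two of the `qᵢ`, and we induct: by the Chinese remainder theorem
`qᵢ⁻¹ℤ/ℤ ≅ gᵢ⁻¹ℤ/ℤ × nᵢ⁻¹ℤ/ℤ` with `gᵢ = gcd (qᵢ, p)`, and since `p` is coprime to `∏ nᵢ` the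
condition `∑ xᵢ ∈ ℤ` splits into the same condition on the `p`-parts and on the rest. The rest is
bounded by induction. An admissible tuple of `p`-parts is determined by all but any one of its
coordinates; using this for two coordinates with `gᵢ = p`, Cauchy–Schwarz gains the factor `p`.
-/

open Finset

namespace Rat

theorem den_add_dvd {x y : ℚ} {n : ℕ} (hx : x.den ∣ n) (hy : y.den ∣ n) : (x + y).den ∣ n :=
  (add_den_dvd_lcm x y).trans (Nat.lcm_dvd hx hy)

theorem den_sum_dvd {ι : Type*} {s : Finset ι} {x : ι → ℚ} {n : ℕ} (h : ∀ i ∈ s, (x i).den ∣ n) :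
    (∑ i ∈ s, x i).den ∣ n :=
  sum_induction x (fun y => y.den ∣ n) (fun _ _ => den_add_dvd) (by simp) h

theorem den_sub_dvd {x y : ℚ} {n : ℕ} (hx : x.den ∣ n) (hy : y.den ∣ n) : (x - y).den ∣ n :=
  (sub_den_dvd_lcm x y).trans (Nat.lcm_dvd hx hy)

theorem den_eq_one_of_add {x y : ℚ} {m n : ℕ} (hmn : m.Coprime n) (hx : x.den ∣ m)
    (hy : y.den ∣ n) (h : (x + y).den = 1) : x.den = 1 := by
  have hxy : x = ((x + y).num : ℚ) - y := by rw [coe_int_num_of_den_eq_one h]; ring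
  have hden : x.den = y.den := by rw [hxy, intCast_sub_den]
  exact Nat.Coprime.eq_one_of_dvd (Nat.Coprime.coprime_dvd_left hx hmn) (hden ▸ hy)

theorem den_add_eq_one_iff {x y : ℚ} {m n : ℕ} (hmn : m.Coprime n) (hx : x.den ∣ m)
    (hy : y.den ∣ n) : (x + y).den = 1 ↔ x.den = 1 ∧ y.den = 1 :=
  ⟨fun h => ⟨den_eq_one_of_add hmn hx hy h, den_eq_one_of_add hmn.symm hy hx (add_comm x y ▸ h)⟩,
    fun ⟨hx₁, hy₁⟩ => Nat.dvd_one.mp (den_add_dvd (by rw [hx₁]) (by rw [hy₁]))⟩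

theorem eq_of_den_sub_eq_one {x y : ℚ} (hx : 0 ≤ x ∧ x < 1) (hy : 0 ≤ y ∧ y < 1)
    (h : (x - y).den = 1) : x = y := by
  rw [← Int.fract_eq_self.2 hx, ← Int.fract_eq_self.2 hy]
  exact Int.fract_eq_fract.2 ⟨_, (coe_int_num_of_den_eq_one h).symm⟩

end Rat

/-- The fractions `a / q` with `0 ≤ a < q`: representatives in `[0, 1)` of `q⁻¹ℤ / ℤ`. -/
def fracs (q : ℕ) : Finset ℚ := (range q).image fun a : ℕ => (a : ℚ) / q

theorem natCast_div_injective {q : ℕ} (hq : q ≠ 0) : Function.Injective fun a : ℕ => (a : ℚ) / q :=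
  fun a b h => by simpa [hq] using h

theorem of_mem_fracs {q : ℕ} {x : ℚ} (hx : x ∈ fracs q) : 0 ≤ x ∧ x < 1 ∧ x.den ∣ q := by
  obtain ⟨a, ha, rfl⟩ := mem_image.1 hx
  have hq : q ≠ 0 := by rintro rfl; simp at ha
  refine ⟨by positivity, (div_lt_one (by positivity)).2 (by exact_mod_cast mem_range.1 ha), ?_⟩
  simpa [div_eq_mul_inv, Rat.inv_natCast_den, hq] using Rat.mul_den_dvd (a : ℚ) (q : ℚ)⁻¹

theorem mem_fracs {q : ℕ} (hq : q ≠ 0) {x : ℚ} : x ∈ fracs q ↔ 0 ≤ x ∧ x < 1 ∧ x.den ∣ q := by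
  refine ⟨of_mem_fracs, fun ⟨hx₀, hx₁, k, hk⟩ => ?_⟩
  have hk₀ : (k : ℚ) ≠ 0 := by rintro h; simp_all
  have hcast : ((x.num.toNat : ℕ) : ℚ) = x.num := by
    exact_mod_cast Int.toNat_of_nonneg (Rat.num_nonneg.2 hx₀)
  have hx : x = (x.num.toNat * k : ℕ) / (q : ℚ) := by
    rw [hk]
    push_cast
    rw [hcast, mul_div_mul_right _ _ hk₀, Rat.num_div_den]
  refine mem_image.2 ⟨x.num.toNat * k, mem_range.2 ?_, hx.symm⟩
  rw [hx, div_lt_one (by positivity)] at hx₁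
  exact_mod_cast hx₁

theorem card_fracs {q : ℕ} (hq : q ≠ 0) : #(fracs q) = q := by
  rw [fracs, card_image_of_injective _ (natCast_div_injective hq), card_range]

theorem fracs_mono {m n : ℕ} (hmn : m ∣ n) (hn : n ≠ 0) : fracs m ⊆ fracs n := by
  intro x hx
  obtain ⟨hx₀, hx₁, hxm⟩ := of_mem_fracs hx
  exact (mem_fracs hn).2 ⟨hx₀, hx₁, hxm.trans hmn⟩

theorem sum_fracs_eq_sum_Ioo {M : Type*} [AddCommMonoid M] {r : ℕ} (hr : r ≠ 0) {F : ℚ → M}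
    (hF : F 0 = 0) : ∑ t ∈ fracs r, F t = ∑ a ∈ Ioo 0 r, F (a / r) := by
  rw [fracs, sum_image fun a _ b _ h => natCast_div_injective hr h]
  refine (sum_subset (fun a ha => mem_range.2 (mem_Ioo.1 ha).2) fun a ha hna => ?_).symm
  obtain rfl : a = 0 := by simp_all
  simpa using hF

section CRT

variable {g n : ℕ}

theorem injOn_fract_add (hgn : g.Coprime n) :
    Set.InjOn (fun p : ℚ × ℚ => Int.fract (p.1 + p.2)) (fracs g ×ˢ fracs n) := by
  rintro ⟨y, z⟩ hyz ⟨y', z'⟩ hyz' h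
  simp only [Set.mem_prod, mem_coe] at hyz hyz'
  obtain ⟨hy₀, hy₁, hyg⟩ := of_mem_fracs hyz.1
  obtain ⟨hz₀, hz₁, hzn⟩ := of_mem_fracs hyz.2
  obtain ⟨hy₀', hy₁', hyg'⟩ := of_mem_fracs hyz'.1
  obtain ⟨hz₀', hz₁', hzn'⟩ := of_mem_fracs hyz'.2
  obtain ⟨k, hk⟩ := Int.fract_eq_fract.1 h
  have hint : ((y - y') + (z - z')).den = 1 := by
    rw [show y - y' + (z - z') = y + z - (y' + z') by ring, hk, Rat.den_intCast]
  obtain ⟨hy, hz⟩ := (Rat.den_add_eq_one_iff hgn (Rat.den_sub_dvd hyg hyg')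
    (Rat.den_sub_dvd hzn hzn')).1 hint
  exact Prod.ext (Rat.eq_of_den_sub_eq_one ⟨hy₀, hy₁⟩ ⟨hy₀', hy₁'⟩ hy)
    (Rat.eq_of_den_sub_eq_one ⟨hz₀, hz₁⟩ ⟨hz₀', hz₁'⟩ hz)

theorem fracs_mul (hgn : g.Coprime n) (hg : g ≠ 0) (hn : n ≠ 0) :
    fracs (g * n) = image₂ (fun y z => Int.fract (y + z)) (fracs g) (fracs n) := by
  symm
  refine eq_of_subset_of_card_le (image₂_subset_iff.2 fun y hy z hz => ?_) ?_
  · obtain ⟨-, -, hyg⟩ := of_mem_fracs hy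
    obtain ⟨-, -, hzn⟩ := of_mem_fracs hz
    rw [mem_fracs (mul_ne_zero hg hn), Rat.den_intFract]
    exact ⟨Int.fract_nonneg _, Int.fract_lt_one _,
      Rat.den_add_dvd (hyg.trans (dvd_mul_right g n)) (hzn.trans (dvd_mul_left n g))⟩
  · rw [card_image₂_iff.2 (injOn_fract_add hgn), card_fracs hg, card_fracs hn,
      card_fracs (mul_ne_zero hg hn)]

theorem sum_fracs_mul {M : Type*} [AddCommMonoid M] (hgn : g.Coprime n) (hg : g ≠ 0) (hn : n ≠ 0)
    (F : ℚ → M) :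
    ∑ x ∈ fracs (g * n), F x = ∑ y ∈ fracs g, ∑ z ∈ fracs n, F (Int.fract (y + z)) := by
  rw [fracs_mul hgn hg hn, ← image_uncurry_product,
    sum_image (coe_product (fracs g) (fracs n) ▸ injOn_fract_add hgn), sum_product]
  rfl

end CRT

section Tuples

variable {ι : Type*} [Fintype ι]

theorem den_sum_fract_add (y z : ι → ℚ) :
    (∑ i, Int.fract (y i + z i)).den = (∑ i, y i + ∑ i, z i).den := by
  have : ∑ i, Int.fract (y i + z i) = ∑ i, y i + ∑ i, z i - ((∑ i, ⌊y i + z i⌋ : ℤ) : ℚ) := by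
    simp only [Int.fract, sum_sub_distrib, sum_add_distrib, Int.cast_sum]
  rw [this, Rat.sub_intCast_den]

theorem coprime_of_coprime_prod {g n : ι → ℕ} (h : (∏ i, g i).Coprime (∏ i, n i)) (i j : ι) :
    (g i).Coprime (n j) :=
  (h.coprime_dvd_left (dvd_prod_of_mem g (mem_univ i))).coprime_dvd_right
    (dvd_prod_of_mem n (mem_univ j))

variable [DecidableEq ι]

theorem injOn_fract_add_pi {g n : ι → ℕ} (hgn : ∀ i, (g i).Coprime (n i)) :
    Set.InjOn (Function.uncurry fun (y z : ι → ℚ) i => Int.fract (y i + z i))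
      ↑((Fintype.piFinset fun i => fracs (g i)) ×ˢ (Fintype.piFinset fun i => fracs (n i))) := by
  rintro ⟨y, z⟩ hyz ⟨y', z'⟩ hyz' h
  simp only [coe_product, Set.mem_prod, mem_coe, Fintype.mem_piFinset] at hyz hyz'
  have hi : ∀ i, (y i, z i) = (y' i, z' i) := fun i =>
    injOn_fract_add (hgn i) (by simp [hyz.1 i, hyz.2 i]) (by simp [hyz'.1 i, hyz'.2 i])
      (congrFun h i)
  exact Prod.ext (funext fun i => congrArg Prod.fst (hi i))
    (funext fun i => congrArg Prod.snd (hi i))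

def intSumTuples (q : ι → ℕ) : Finset (ι → ℚ) :=
  (Fintype.piFinset fun i => fracs (q i)).filter fun x => (∑ i, x i).den = 1

theorem eq_of_mem_intSumTuples {q : ι → ℕ} {x y : ι → ℚ} (hx : x ∈ intSumTuples q)
    (hy : y ∈ intSumTuples q) (k : ι) (hxy : ∀ i ≠ k, x i = y i) : x = y := by
  simp only [intSumTuples, mem_filter, Fintype.mem_piFinset] at hx hy
  funext i
  rcases eq_or_ne i k with rfl | hi
  · obtain ⟨hx₀, hx₁, -⟩ := of_mem_fracs (hx.1 i)
    obtain ⟨hy₀, hy₁, -⟩ := of_mem_fracs (hy.1 i)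
    have hdiff : x i - y i = ∑ j, x j - ∑ j, y j := by
      rw [← add_sum_erase _ x (mem_univ i), ← add_sum_erase _ y (mem_univ i),
        sum_congr rfl fun j hj => hxy j (ne_of_mem_erase hj)]
      ring
    refine Rat.eq_of_den_sub_eq_one ⟨hx₀, hx₁⟩ ⟨hy₀, hy₁⟩ ?_
    rw [hdiff]
    exact Nat.dvd_one.1 (Rat.den_sub_dvd (by rw [hx.2]) (by rw [hy.2]))
  · exact hxy i hi

theorem sum_intSumTuples_mul {M : Type*} [AddCommMonoid M] (g n : ι → ℕ)
    (hgn : (∏ i, g i).Coprime (∏ i, n i)) (hg : ∀ i, g i ≠ 0) (hn : ∀ i, n i ≠ 0)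
    (F : (ι → ℚ) → M) :
    ∑ x ∈ intSumTuples (fun i => g i * n i), F x =
      ∑ y ∈ intSumTuples g, ∑ z ∈ intSumTuples n, F fun i => Int.fract (y i + z i) := by
  have hcop : ∀ i, (g i).Coprime (n i) := fun i => coprime_of_coprime_prod hgn i i
  have hpi : (Fintype.piFinset fun i => fracs (g i * n i)) =
      image₂ (fun y z i => Int.fract (y i + z i))
        (Fintype.piFinset fun i => fracs (g i)) (Fintype.piFinset fun i => fracs (n i)) := by
    simp_rw [fracs_mul (hcop _) (hg _) (hn _)]
    exact Fintype.piFinset_image₂ _ _ _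
  have hden : ∀ y ∈ Fintype.piFinset fun i => fracs (g i),
      ∀ z ∈ Fintype.piFinset fun i => fracs (n i),
      (∑ i, Int.fract (y i + z i)).den = 1 ↔ (∑ i, y i).den = 1 ∧ (∑ i, z i).den = 1 := by
    intro y hy z hz
    rw [Fintype.mem_piFinset] at hy hz
    rw [den_sum_fract_add]
    exact Rat.den_add_eq_one_iff hgn
      (Rat.den_sum_dvd fun i _ => (of_mem_fracs (hy i)).2.2.trans (dvd_prod_of_mem g (mem_univ i)))
      (Rat.den_sum_dvd fun i _ => (of_mem_fracs (hz i)).2.2.trans (dvd_prod_of_mem n (mem_univ i)))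
  rw [intSumTuples, sum_filter, hpi, ← image_uncurry_product,
    sum_image (injOn_fract_add_pi hcop), sum_product, intSumTuples, sum_filter]
  refine sum_congr rfl fun y hy => ?_
  rw [intSumTuples, sum_filter]
  split_ifs with hy'
  · exact sum_congr rfl fun z hz => by
      simp only [Function.uncurry_apply_pair, hden y hy z hz, hy', true_and]
  · exact sum_eq_zero fun z hz => by simp [hden y hy z hz, hy']

theorem sum_piFinset_Ioo_eq_sum_intSumTuples {M : Type*} [CommSemiring M] {q : ι → ℕ}
    (hq : ∀ i, q i ≠ 0) {F : ι → ℚ → M} (hF : ∀ i, F i 0 = 0) :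
    ∑ a ∈ (Fintype.piFinset fun i => Ioo 0 (q i)).filter
        (fun a => (∑ i, (a i : ℚ) / q i).den = 1), ∏ i, F i ((a i : ℚ) / q i) =
      ∑ x ∈ intSumTuples q, ∏ i, F i (x i) := by
  have himage : intSumTuples q = ((Fintype.piFinset fun i => range (q i)).filter
      fun a => (∑ i, (a i : ℚ) / q i).den = 1).image fun a i => (a i : ℚ) / q i := by
    simp only [intSumTuples, fracs]
    rw [Fintype.piFinset_image, filter_image]
  rw [himage, sum_image fun a _ b _ h =>
    funext fun i => natCast_div_injective (hq i) (congrFun h i)]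
  refine sum_subset (filter_subset_filter _ (Fintype.piFinset_subset _ _ fun i a ha =>
    mem_range.2 (mem_Ioo.1 ha).2)) fun a ha hna => ?_
  simp only [mem_filter, Fintype.mem_piFinset, mem_range, mem_Ioo] at ha hna
  obtain ⟨i, hi⟩ : ∃ i, a i = 0 := by
    by_contra! h
    exact hna ⟨fun i => ⟨Nat.pos_of_ne_zero (h i), ha.1 i⟩, ha.2⟩
  exact prod_eq_zero (mem_univ i) (by simp [hi, hF])

end Tuples

section CauchySchwarz

variable {ι α : Type*} [Fintype ι] [DecidableEq ι] [DecidableEq α] {S : ι → Finset α}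
  {B : Finset (ι → α)}

theorem sum_prod_erase_le_prod_sum (hB : B ⊆ Fintype.piFinset S) (k : ι)
    (hk : ∀ b ∈ B, ∀ b' ∈ B, (∀ i ≠ k, b i = b' i) → b = b') {h : ι → α → ℝ}
    (hh : ∀ i t, 0 ≤ h i t) :
    ∑ b ∈ B, ∏ i ∈ univ.erase k, h i (b i) ≤ ∏ i ∈ univ.erase k, ∑ t ∈ S i, h i t := by
  have hmem : ∀ i, i ∈ univ.erase k ↔ i ≠ k := by simp
  let π : (ι → α) → ({i // i ≠ k} → α) := fun b i => b i
  calc ∑ b ∈ B, ∏ i ∈ univ.erase k, h i (b i)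
        = ∑ c ∈ B.image π, ∏ i : {i // i ≠ k}, h i (c i) := by
        rw [sum_image fun b hb b' hb' e => hk b hb b' hb' fun i hi => congrFun e ⟨i, hi⟩]
        exact sum_congr rfl fun b _ => prod_subtype _ hmem _
    _ ≤ ∑ c ∈ Fintype.piFinset fun i : {i // i ≠ k} => S i, ∏ i : {i // i ≠ k}, h i (c i) := by
        refine sum_le_sum_of_subset_of_nonneg (fun c hc => ?_) fun c _ _ =>
          prod_nonneg fun i _ => hh _ _
        obtain ⟨b, hb, rfl⟩ := mem_image.1 hc
        exact Fintype.mem_piFinset.2 fun i => Fintype.mem_piFinset.1 (hB hb) i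
    _ = ∏ i ∈ univ.erase k, ∑ t ∈ S i, h i t := by
        rw [← prod_univ_sum, prod_subtype _ hmem]

theorem sum_sq_mul_prod_le (hB : B ⊆ Fintype.piFinset S) {i k : ι} (hik : i ≠ k)
    (hk : ∀ b ∈ B, ∀ b' ∈ B, (∀ j ≠ k, b j = b' j) → b = b') {f : ι → α → ℝ}
    (hf : ∀ i t, 0 ≤ f i t) :
    ∑ b ∈ B, f i (b i) ^ 2 * ∏ j ∈ (univ.erase i).erase k, f j (b j) ≤
      (∑ t ∈ S i, f i t ^ 2) * ∏ j ∈ (univ.erase i).erase k, ∑ t ∈ S j, f j t := by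
  set h := Function.update f i fun t => f i t ^ 2
  have hh : ∀ j t, 0 ≤ h j t := fun j t => by
    rcases eq_or_ne j i with rfl | hj
    · simp only [h, Function.update_self]; positivity
    · simp only [h, Function.update_of_ne hj]; exact hf j t
  have hi : i ∈ univ.erase k := mem_erase.2 ⟨hik, mem_univ i⟩
  have hrest : ∀ F : ι → ℝ, ∏ j ∈ univ.erase k, F j =
      F i * ∏ j ∈ (univ.erase i).erase k, F j := fun F => by
    rw [← mul_prod_erase _ _ hi, erase_right_comm]
  have hE : ∀ j ∈ (univ.erase i).erase k, h j = f j := fun j hj =>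
    Function.update_of_ne (ne_of_mem_erase (mem_of_mem_erase hj)) _ _
  have key := sum_prod_erase_le_prod_sum hB k hk hh
  simp only [hrest, h, Function.update_self] at key
  convert key using 3 with b _ j hj
  · exact prod_congr rfl fun j hj => congrFun (hE j hj).symm (b j)
  · exact sum_congr rfl fun t _ => congrFun (hE j hj).symm t

theorem sum_prod_le_of_unique_completion (hB : B ⊆ Fintype.piFinset S) {i₁ i₂ : ι}
    (h₁₂ : i₁ ≠ i₂) (h₁ : ∀ b ∈ B, ∀ b' ∈ B, (∀ j ≠ i₁, b j = b' j) → b = b')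
    (h₂ : ∀ b ∈ B, ∀ b' ∈ B, (∀ j ≠ i₂, b j = b' j) → b = b') {f : ι → α → ℝ}
    (hf : ∀ i t, 0 ≤ f i t) :
    ∑ b ∈ B, ∏ i, f i (b i) ≤ √(∑ t ∈ S i₁, f i₁ t ^ 2) * √(∑ t ∈ S i₂, f i₂ t ^ 2) *
      ∏ i ∈ (univ.erase i₁).erase i₂, ∑ t ∈ S i, f i t := by
  set E := (univ.erase i₁).erase i₂
  set R : (ι → α) → ℝ := fun b => ∏ j ∈ E, f j (b j)
  have hR : ∀ b, 0 ≤ R b := fun b => prod_nonneg fun j _ => hf j (b j)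
  have hP : 0 ≤ ∏ i ∈ E, ∑ t ∈ S i, f i t := prod_nonneg fun i _ => sum_nonneg fun t _ => hf i t
  have hsplit : ∀ b, ∏ i, f i (b i) = √(f i₁ (b i₁) ^ 2 * R b) * √(f i₂ (b i₂) ^ 2 * R b) := by
    intro b
    have := hf i₁ (b i₁); have := hf i₂ (b i₂); have := hR b
    rw [← mul_prod_erase univ _ (mem_univ i₁),
      ← mul_prod_erase _ _ (mem_erase.2 ⟨h₁₂.symm, mem_univ i₂⟩), ← Real.sqrt_mul (by positivity),
      show f i₁ (b i₁) ^ 2 * R b * (f i₂ (b i₂) ^ 2 * R b) = (f i₁ (b i₁) * (f i₂ (b i₂) * R b)) ^ 2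
        by ring, Real.sqrt_sq (by positivity)]
  have hE : E = (univ.erase i₂).erase i₁ := erase_right_comm
  calc ∑ b ∈ B, ∏ i, f i (b i)
      ≤ √(∑ b ∈ B, f i₁ (b i₁) ^ 2 * R b) * √(∑ b ∈ B, f i₂ (b i₂) ^ 2 * R b) := by
        simp_rw [hsplit]
        exact Real.sum_sqrt_mul_sqrt_le B (fun b => by have := hR b; positivity)
          fun b => by have := hR b; positivity
    _ ≤ √((∑ t ∈ S i₁, f i₁ t ^ 2) * ∏ i ∈ E, ∑ t ∈ S i, f i t) *
          √((∑ t ∈ S i₂, f i₂ t ^ 2) * ∏ i ∈ E, ∑ t ∈ S i, f i t) := by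
        gcongr
        · exact sum_sq_mul_prod_le hB h₁₂ h₂ hf
        · simp only [R, hE]
          exact sum_sq_mul_prod_le hB h₁₂.symm h₁ hf
    _ = _ := by
        rw [Real.sqrt_mul (sum_nonneg fun _ _ => sq_nonneg _),
          Real.sqrt_mul (sum_nonneg fun _ _ => sq_nonneg _)]
        rw [mul_mul_mul_comm, Real.mul_self_sqrt hP]

theorem card_mul_sum_prod_le (hB : B ⊆ Fintype.piFinset S) {i₁ i₂ : ι} (h₁₂ : i₁ ≠ i₂)
    (h₁ : ∀ b ∈ B, ∀ b' ∈ B, (∀ j ≠ i₁, b j = b' j) → b = b')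
    (h₂ : ∀ b ∈ B, ∀ b' ∈ B, (∀ j ≠ i₂, b j = b' j) → b = b') (hcard : #(S i₁) = #(S i₂))
    {f : ι → α → ℝ} (hf : ∀ i t, 0 ≤ f i t) :
    #(S i₁) * ∑ b ∈ B, ∏ i, f i (b i) ≤ ∏ i, √(#(S i) * ∑ t ∈ S i, f i t ^ 2) := by
  have hL : ∀ i, ∑ t ∈ S i, f i t ≤ √(#(S i) * ∑ t ∈ S i, f i t ^ 2) := fun i => by
    simpa [Real.sqrt_mul] using Real.sum_mul_le_sqrt_mul_sqrt (S i) (fun _ => 1) (f i)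
  rw [← mul_prod_erase univ _ (mem_univ i₁),
    ← mul_prod_erase _ _ (mem_erase.2 ⟨h₁₂.symm, mem_univ i₂⟩), ← hcard,
    Real.sqrt_mul (Nat.cast_nonneg _), Real.sqrt_mul (Nat.cast_nonneg _)]
  calc (#(S i₁) : ℝ) * ∑ b ∈ B, ∏ i, f i (b i)
      ≤ #(S i₁) * (√(∑ t ∈ S i₁, f i₁ t ^ 2) * √(∑ t ∈ S i₂, f i₂ t ^ 2) *
          ∏ i ∈ (univ.erase i₁).erase i₂, ∑ t ∈ S i, f i t) := by
        gcongr
        exact sum_prod_le_of_unique_completion hB h₁₂ h₁ h₂ hf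
    _ ≤ #(S i₁) * (√(∑ t ∈ S i₁, f i₁ t ^ 2) * √(∑ t ∈ S i₂, f i₂ t ^ 2) *
          ∏ i ∈ (univ.erase i₁).erase i₂, √(#(S i) * ∑ t ∈ S i, f i t ^ 2)) := by
        refine mul_le_mul_of_nonneg_left (mul_le_mul_of_nonneg_left ?_ (by positivity))
          (by positivity)
        exact prod_le_prod (fun i _ => sum_nonneg fun t _ => hf i t) fun i _ => hL i
    _ = √(#(S i₁)) * √(#(S i₁)) * (√(∑ t ∈ S i₁, f i₁ t ^ 2) * √(∑ t ∈ S i₂, f i₂ t ^ 2) *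
          ∏ i ∈ (univ.erase i₁).erase i₂, √(#(S i) * ∑ t ∈ S i, f i t ^ 2)) := by
        rw [Real.mul_self_sqrt (Nat.cast_nonneg _)]
    _ = _ := by ring

end CauchySchwarz

theorem coprime_div_gcd_of_squarefree {p q : ℕ} (hp : p.Prime) (hq : Squarefree q) :
    p.Coprime (q / q.gcd p) := by
  refine (Nat.Prime.coprime_iff_not_dvd hp).2 fun hdvd => ?_
  have hpq : p ∣ q := hdvd.trans (Nat.div_dvd_of_dvd (Nat.gcd_dvd_left q p))
  rw [Nat.gcd_eq_right hpq] at hdvd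
  refine hp.one_lt.ne' (Nat.isUnit_iff.1 (hq p ?_))
  simpa [Nat.mul_div_cancel' hpq] using mul_dvd_mul_left p hdvd

def PrimesShared {ι : Type*} (q : ι → ℕ) : Prop :=
  ∀ i p, p.Prime → p ∣ q i → ∃ j ≠ i, p ∣ q j

theorem PrimesShared.div_gcd {ι : Type*} {q : ι → ℕ} (h : PrimesShared q) {p : ℕ} (hp : p.Prime)
    (hq : ∀ i, Squarefree (q i)) : PrimesShared fun i => q i / (q i).gcd p := by
  intro i ℓ hℓ hℓi
  have hℓp : ℓ ≠ p := by
    rintro rfl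
    exact (Nat.Prime.coprime_iff_not_dvd hℓ).1 (coprime_div_gcd_of_squarefree hℓ (hq i)) hℓi
  obtain ⟨j, hji, hℓj⟩ := h i ℓ hℓ (hℓi.trans (Nat.div_dvd_of_dvd (Nat.gcd_dvd_left _ _)))
  rw [← Nat.mul_div_cancel' (Nat.gcd_dvd_left (q j) p)] at hℓj
  refine ⟨j, hji, ((Nat.Prime.dvd_mul hℓ).1 hℓj).resolve_left fun hℓg => hℓp ?_⟩
  exact (Nat.prime_dvd_prime_iff_eq hℓ hp).1 (hℓg.trans (Nat.gcd_dvd_right _ _))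

section LcmBound

variable {ι : Type*} [Fintype ι] [DecidableEq ι]

theorem card_mul_sum_intSumTuples_le {g : ι → ℕ} (hg : ∀ i, g i ≠ 0) {i₁ i₂ : ι} (h₁₂ : i₁ ≠ i₂)
    (hg₁₂ : g i₁ = g i₂) {f : ι → ℚ → ℝ} (hf : ∀ i t, 0 ≤ f i t) :
    (g i₁ : ℝ) * ∑ y ∈ intSumTuples g, ∏ i, f i (y i) ≤
      ∏ i, √(g i * ∑ t ∈ fracs (g i), f i t ^ 2) := by
  simpa [card_fracs, hg] using card_mul_sum_prod_le (S := fun i => fracs (g i))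
    (B := intSumTuples g) (filter_subset _ _) h₁₂
    (fun _ hb _ hb' => eq_of_mem_intSumTuples hb hb' i₁)
    (fun _ hb _ hb' => eq_of_mem_intSumTuples hb hb' i₂)
    (by rw [card_fracs (hg _), card_fracs (hg _), hg₁₂]) hf

def HasLcmBound (q : ι → ℕ) : Prop :=
  ∀ f : ι → ℚ → ℝ, (∀ i t, 0 ≤ f i t) →
    ((univ.lcm q : ℕ) : ℝ) * ∑ x ∈ intSumTuples q, ∏ i, f i (x i) ≤
      ∏ i, √(q i * ∑ t ∈ fracs (q i), f i t ^ 2)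

theorem hasLcmBound_one : HasLcmBound fun _ : ι => 1 := by
  intro f hf
  have hlcm : univ.lcm (fun _ : ι => 1) = 1 := Nat.dvd_one.1 (lcm_dvd fun _ _ => dvd_rfl)
  simp [intSumTuples, fracs, Fintype.piFinset_singleton, filter_singleton, hlcm,
    Real.sqrt_sq (hf _ _)]

theorem HasLcmBound.mul {g n : ι → ℕ} (hbound : HasLcmBound n)
    (hgn : (∏ i, g i).Coprime (∏ i, n i)) (hg : ∀ i, g i ≠ 0) (hn : ∀ i, n i ≠ 0) {p : ℕ}
    (hgp : ∀ i, g i ∣ p) {i₁ i₂ : ι} (h₁₂ : i₁ ≠ i₂) (hg₁ : g i₁ = p) (hg₂ : g i₂ = p) :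
    HasLcmBound fun i => g i * n i := by
  intro f hf
  set B : ι → ℚ → ℝ := fun i y => ∑ z ∈ fracs (n i), f i (Int.fract (y + z)) ^ 2
  have hB : ∀ i y, 0 ≤ B i y := fun i y => sum_nonneg fun _ _ => sq_nonneg _
  have hlcm : ((univ.lcm fun i => g i * n i : ℕ) : ℝ) ≤ p * univ.lcm n := by
    have hpos : 0 < p * univ.lcm n := Nat.pos_of_ne_zero <| mul_ne_zero (hg₁ ▸ hg i₁) <| by
      simp [Finset.lcm_eq_zero_iff, hn]
    exact_mod_cast Nat.le_of_dvd hpos <|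
      Finset.lcm_dvd fun i _ => mul_dvd_mul (hgp i) (dvd_lcm (mem_univ i))
  have hpart : (p : ℝ) * ∑ y ∈ intSumTuples g, ∏ i, √(B i (y i)) ≤
      ∏ i, √(g i * ∑ t ∈ fracs (g i), B i t) := by
    simpa [hg₁, Real.sq_sqrt, hB] using card_mul_sum_intSumTuples_le hg h₁₂ (hg₁.trans hg₂.symm)
      (f := fun i y => √(B i y)) fun _ _ => Real.sqrt_nonneg _
  calc ((univ.lcm fun i => g i * n i : ℕ) : ℝ) *
        ∑ x ∈ intSumTuples (fun i => g i * n i), ∏ i, f i (x i)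
      ≤ (p * univ.lcm n) * ∑ x ∈ intSumTuples (fun i => g i * n i), ∏ i, f i (x i) :=
        mul_le_mul_of_nonneg_right hlcm (sum_nonneg fun _ _ => prod_nonneg fun _ _ => hf _ _)
    _ = p * ∑ y ∈ intSumTuples g, ((univ.lcm n : ℕ) : ℝ) *
          ∑ z ∈ intSumTuples n, ∏ i, f i (Int.fract (y i + z i)) := by
        rw [sum_intSumTuples_mul g n hgn hg hn, mul_assoc, mul_sum]
    _ ≤ p * ∑ y ∈ intSumTuples g, ∏ i, √(n i * B i (y i)) := by
        gcongr with y
        exact hbound (fun i z => f i (Int.fract (y i + z))) fun _ _ => hf _ _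
    _ = (∏ i, √(n i : ℝ)) * (p * ∑ y ∈ intSumTuples g, ∏ i, √(B i (y i))) := by
        simp_rw [Real.sqrt_mul (Nat.cast_nonneg _), prod_mul_distrib, mul_sum]
        ring_nf
    _ ≤ (∏ i, √(n i : ℝ)) * ∏ i, √(g i * ∑ t ∈ fracs (g i), B i t) := by gcongr
    _ = _ := by
        rw [← prod_mul_distrib]
        refine prod_congr rfl fun i _ => ?_
        rw [← Real.sqrt_mul (Nat.cast_nonneg _),
          sum_fracs_mul (coprime_of_coprime_prod hgn i i) (hg i) (hn i)]
        push_cast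
        rw [← mul_assoc, mul_comm (n i : ℝ)]

theorem hasLcmBound_of_primesShared (q : ι → ℕ) (hq : ∀ i, Squarefree (q i))
    (hshared : PrimesShared q) : HasLcmBound q := by
  induction hN : ∑ i, q i using Nat.strong_induction_on generalizing q with
  | _ N ih =>
  by_cases h1 : ∀ i, q i = 1
  · obtain rfl : q = fun _ => 1 := funext h1
    exact hasLcmBound_one
  obtain ⟨i₁, hi₁⟩ := not_forall.1 h1
  set p := (q i₁).minFac
  have hp : p.Prime := Nat.minFac_prime hi₁
  have hpq₁ : p ∣ q i₁ := Nat.minFac_dvd _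
  obtain ⟨i₂, h₂₁, hpq₂⟩ := hshared i₁ p hp hpq₁
  have hq₀ : ∀ i, q i ≠ 0 := fun i => (hq i).ne_zero
  set n := fun i => q i / (q i).gcd p
  have hqgn : q = fun i => (q i).gcd p * n i :=
    funext fun i => (Nat.mul_div_cancel' (Nat.gcd_dvd_left _ _)).symm
  have hlt : ∑ i, n i < N := hN ▸ sum_lt_sum (fun i _ => Nat.div_le_self _ _)
    ⟨i₁, mem_univ _, Nat.div_lt_self (Nat.pos_of_ne_zero (hq₀ i₁))
      (by rw [Nat.gcd_eq_right hpq₁]; exact hp.one_lt)⟩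
  have hn : HasLcmBound n := ih _ hlt n
    (fun i => (hq i).squarefree_of_dvd (Nat.div_dvd_of_dvd (Nat.gcd_dvd_left _ _)))
    (hshared.div_gcd hp hq) rfl
  rw [hqgn]
  exact hn.mul (Nat.Coprime.prod_left fun i _ => Nat.Coprime.prod_right fun j _ =>
      (coprime_div_gcd_of_squarefree hp (hq j)).coprime_dvd_left (Nat.gcd_dvd_right _ _))
    (fun i => (Nat.gcd_pos_of_pos_right _ hp.pos).ne')
    (fun i => (Nat.div_pos (Nat.gcd_le_left _ (Nat.pos_of_ne_zero (hq₀ i)))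
      (Nat.gcd_pos_of_pos_right _ hp.pos)).ne')
    (fun i => Nat.gcd_dvd_right _ _) h₂₁.symm (Nat.gcd_eq_right hpq₁) (Nat.gcd_eq_right hpq₂)

end LcmBound

section Reduction

variable {ι : Type*} [Fintype ι]

theorem lcm_mul_prod_le_of_dvd {q r : ι → ℕ} (hq : ∀ i, q i ≠ 0) (hr : ∀ i, r i ∣ q i) :
    univ.lcm q * ∏ i, r i ≤ univ.lcm r * ∏ i, q i := by
  set u := fun i => q i / r i
  have hqu : ∀ i, q i = r i * u i := fun i => (Nat.mul_div_cancel' (hr i)).symm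
  have hu : ∀ i, u i ≠ 0 := fun i h => hq i (by rw [hqu i, h, mul_zero])
  have hdvd : univ.lcm q ∣ univ.lcm r * ∏ i, u i := lcm_dvd fun i _ => by
    rw [hqu i]
    exact mul_dvd_mul (dvd_lcm (mem_univ i)) (dvd_prod_of_mem u (mem_univ i))
  have hpos : 0 < univ.lcm r * ∏ i, u i := Nat.pos_of_ne_zero <| mul_ne_zero
    (lcm_ne_zero_iff.2 fun i _ => ne_zero_of_dvd_ne_zero (hq i) (hr i))
    (prod_ne_zero_iff.2 fun i _ => hu i)
  calc univ.lcm q * ∏ i, r i ≤ univ.lcm r * (∏ i, u i) * ∏ i, r i :=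
        Nat.mul_le_mul_right _ (Nat.le_of_dvd hpos hdvd)
    _ = univ.lcm r * ∏ i, q i := by
        rw [prod_congr rfl fun i _ => hqu i, prod_mul_distrib]
        ring

theorem one_div_lcm_mul_prod_le_of_dvd {q r : ι → ℕ} (hq : ∀ i, q i ≠ 0) (hr : ∀ i, r i ∣ q i)
    {s : ι → ℝ} (hs : ∀ i, 0 ≤ s i) :
    1 / ((univ.lcm r : ℕ) : ℝ) * ∏ i, (r i * s i) ≤
      1 / ((univ.lcm q : ℕ) : ℝ) * ∏ i, (q i * s i) := by
  have hlcm : ∀ {m : ι → ℕ}, (∀ i, m i ≠ 0) → (0 : ℝ) < (univ.lcm m : ℕ) := fun hm =>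
    Nat.cast_pos.2 (Nat.pos_of_ne_zero (lcm_ne_zero_iff.2 fun i _ => hm i))
  rw [prod_mul_distrib, prod_mul_distrib, ← mul_assoc, ← mul_assoc]
  refine mul_le_mul_of_nonneg_right ?_ (prod_nonneg fun i _ => hs i)
  rw [one_div_mul_eq_div, one_div_mul_eq_div,
    div_le_div_iff₀ (hlcm fun i => ne_zero_of_dvd_ne_zero (hq i) (hr i)) (hlcm hq),
    mul_comm _ ((univ.lcm q : ℕ) : ℝ), mul_comm (∏ i, (q i : ℝ))]
  exact_mod_cast lcm_mul_prod_le_of_dvd hq hr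

variable [DecidableEq ι]

def sharedPart (q : ι → ℕ) (i : ι) : ℕ := (q i).gcd (∏ j ∈ univ.erase i, q j)

theorem sharedPart_dvd (q : ι → ℕ) (i : ι) : sharedPart q i ∣ q i := Nat.gcd_dvd_left _ _

theorem primesShared_sharedPart (q : ι → ℕ) : PrimesShared (sharedPart q) := by
  intro i p hp hpi
  obtain ⟨j, hj, hpj⟩ :=
    (Prime.dvd_finsetProd_iff hp.prime _).1 (hpi.trans (Nat.gcd_dvd_right _ _))
  have hji : j ≠ i := ne_of_mem_erase hj
  exact ⟨j, hji, Nat.dvd_gcd hpj ((hpi.trans (sharedPart_dvd q i)).trans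
    (dvd_prod_of_mem q (mem_erase.2 ⟨hji.symm, mem_univ i⟩)))⟩

theorem intSumTuples_sharedPart {q : ι → ℕ} (hq : ∀ i, q i ≠ 0) :
    intSumTuples (sharedPart q) = intSumTuples q := by
  ext x
  simp only [intSumTuples, mem_filter, Fintype.mem_piFinset, and_congr_left_iff]
  intro hx
  refine ⟨fun h i => fracs_mono (sharedPart_dvd q i) (hq i) (h i), fun h i => ?_⟩
  obtain ⟨hx₀, hx₁, hxq⟩ := of_mem_fracs (h i)
  refine (mem_fracs (Nat.gcd_pos_of_pos_left _ (Nat.pos_of_ne_zero (hq i))).ne').2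
    ⟨hx₀, hx₁, Nat.dvd_gcd hxq ?_⟩
  have hxi : x i = ((∑ j, x j).num : ℚ) - ∑ j ∈ univ.erase i, x j := by
    rw [Rat.coe_int_num_of_den_eq_one hx, ← add_sum_erase _ _ (mem_univ i)]
    ring
  rw [hxi, Rat.intCast_sub_den]
  exact Rat.den_sum_dvd fun j hj => (of_mem_fracs (h j)).2.2.trans (dvd_prod_of_mem q hj)

theorem sum_intSumTuples_prod_le (q : ι → ℕ) (hq : ∀ i, Squarefree (q i)) {f : ι → ℚ → ℝ}
    (hf : ∀ i t, 0 ≤ f i t) {M : ι → ℝ}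
    (hM : ∀ i r, r ∣ q i → ∑ t ∈ fracs r, f i t ^ 2 ≤ r * M i) :
    ∑ x ∈ intSumTuples q, ∏ i, f i (x i) ≤ 1 / ((univ.lcm q : ℕ) : ℝ) * ∏ i, (q i * √(M i)) := by
  have hq₀ : ∀ i, q i ≠ 0 := fun i => (hq i).ne_zero
  set r := sharedPart q
  have hr₀ : ∀ i, r i ≠ 0 := fun i => ne_zero_of_dvd_ne_zero (hq₀ i) (sharedPart_dvd q i)
  have hlcm : (0 : ℝ) < (univ.lcm r : ℕ) :=
    Nat.cast_pos.2 (Nat.pos_of_ne_zero (lcm_ne_zero_iff.2 fun i _ => hr₀ i))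
  calc ∑ x ∈ intSumTuples q, ∏ i, f i (x i) = ∑ x ∈ intSumTuples r, ∏ i, f i (x i) := by
        rw [intSumTuples_sharedPart hq₀]
    _ ≤ 1 / ((univ.lcm r : ℕ) : ℝ) * ∏ i, √(r i * ∑ t ∈ fracs (r i), f i t ^ 2) := by
        rw [one_div_mul_eq_div, le_div_iff₀ hlcm, mul_comm]
        exact hasLcmBound_of_primesShared r
          (fun i => (hq i).squarefree_of_dvd (sharedPart_dvd q i)) (primesShared_sharedPart q) f hf
    _ ≤ 1 / ((univ.lcm r : ℕ) : ℝ) * ∏ i, (r i * √(M i)) := by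
        gcongr with i
        calc √(r i * ∑ t ∈ fracs (r i), f i t ^ 2) ≤ √(r i * (r i * M i)) :=
              Real.sqrt_le_sqrt (mul_le_mul_of_nonneg_left (hM i _ (sharedPart_dvd q i))
                (Nat.cast_nonneg _))
          _ = r i * √(M i) := by
              rw [← mul_assoc, Real.sqrt_mul (mul_self_nonneg _),
                Real.sqrt_mul_self (Nat.cast_nonneg _)]
    _ ≤ 1 / ((univ.lcm q : ℕ) : ℝ) * ∏ i, (q i * √(M i)) :=
        one_div_lcm_mul_prod_le_of_dvd hq₀ (sharedPart_dvd q) fun _ => Real.sqrt_nonneg _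

end Reduction

/-- Extending `‖G‖` by zero at `0` turns the sums over `0 < a < q` into sums over `fracs q`. -/
noncomputable def normExceptZero (G : ℝ → ℂ) (x : ℚ) : ℝ := if x = 0 then 0 else ‖G x‖

theorem normExceptZero_nonneg (G : ℝ → ℂ) (x : ℚ) : 0 ≤ normExceptZero G x := by
  unfold normExceptZero
  split_ifs <;> positivity

theorem normExceptZero_natCast_div (G : ℝ → ℂ) {a m : ℕ} (ha : a ≠ 0) (hm : m ≠ 0) :
    normExceptZero G (a / m) = ‖G (a / m)‖ := by
  simp [normExceptZero, ha, hm]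

theorem sum_sq_normExceptZero_le {G : ℝ → ℂ} {G₀ : ℕ → ℝ}
    (hmono : ∀ m n : ℕ, 0 < m → m ≤ n → G₀ m ≤ G₀ n)
    (hbound : ∀ Q : ℕ, Squarefree Q → 1 < Q →
      ∑ a ∈ Ioo 0 Q, ‖G ((a : ℝ) / (Q : ℝ))‖ ^ 2 ≤ (Q : ℝ) * G₀ Q)
    {q r : ℕ} (hq : Squarefree q) (hq₁ : 1 < q) (hr : r ∣ q) :
    ∑ t ∈ fracs r, normExceptZero G t ^ 2 ≤ r * G₀ q := by
  have hr₀ : r ≠ 0 := ne_zero_of_dvd_ne_zero hq.ne_zero hr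
  rw [sum_fracs_eq_sum_Ioo hr₀ (by simp [normExceptZero])]
  rcases (Nat.one_le_iff_ne_zero.2 hr₀).eq_or_lt with rfl | hr₁
  · have hG₀ : 0 ≤ G₀ q := nonneg_of_mul_nonneg_right
      ((sum_nonneg fun _ _ => sq_nonneg _).trans (hbound q hq hq₁)) (by positivity)
    simpa [show Ioo 0 1 = (∅ : Finset ℕ) from rfl] using hG₀
  calc ∑ a ∈ Ioo 0 r, normExceptZero G (a / r) ^ 2 = ∑ a ∈ Ioo 0 r, ‖G ((a : ℝ) / r)‖ ^ 2 :=
        sum_congr rfl fun a ha => by rw [normExceptZero_natCast_div G (mem_Ioo.1 ha).1.ne' hr₀]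
    _ ≤ r * G₀ r := hbound r (hq.squarefree_of_dvd hr) hr₁
    _ ≤ r * G₀ q := by
        gcongr
        exact hmono r q (by omega) (Nat.le_of_dvd (by omega) hr)

/-- Variant basic inequality (Lemma 2). -/
theorem stmt_1 (k : ℕ) (q : Fin k → ℕ) (hsf : ∀ i, Squarefree (q i))
    (hq : ∀ i, 1 < q i)
    (G : ℝ → ℂ) (G₀ : ℕ → ℝ)
    (hmono : ∀ m n : ℕ, 0 < m → m ≤ n → G₀ m ≤ G₀ n)
    (hbound : ∀ Q : ℕ, Squarefree Q → 1 < Q →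
      ∑ a ∈ Finset.Ioo 0 Q, ‖G ((a : ℝ) / (Q : ℝ))‖ ^ 2 ≤ (Q : ℝ) * G₀ Q) :
    ‖∑ a ∈ (Fintype.piFinset fun i => Finset.Ioo 0 (q i)).filter
        (fun a => (∑ i, (a i : ℚ) / (q i : ℚ)).den = 1),
      ∏ i, G ((a i : ℝ) / (q i : ℝ))‖ ≤
    (1 / ((Finset.univ.lcm q : ℕ) : ℝ)) *
      ∏ i, (q i : ℝ) * (G₀ (q i)) ^ ((1 : ℝ) / 2) := by
  have hq₀ : ∀ i, q i ≠ 0 := fun i => (hsf i).ne_zero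
  simp_rw [← Real.sqrt_eq_rpow]
  calc _ ≤ ∑ a ∈ (Fintype.piFinset fun i => Ioo 0 (q i)).filter
          (fun a => (∑ i, (a i : ℚ) / (q i : ℚ)).den = 1),
          ∏ i, normExceptZero G ((a i : ℚ) / q i) := by
        refine (norm_sum_le _ _).trans_eq (sum_congr rfl fun a ha => ?_)
        simp only [mem_filter, Fintype.mem_piFinset, mem_Ioo] at ha
        rw [norm_prod]
        exact prod_congr rfl fun i _ => (normExceptZero_natCast_div G (ha.1 i).1.ne' (hq₀ i)).symm
    _ = ∑ x ∈ intSumTuples q, ∏ i, normExceptZero G (x i) :=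
        sum_piFinset_Ioo_eq_sum_intSumTuples hq₀ fun _ => by simp [normExceptZero]
    _ ≤ _ := sum_intSumTuples_prod_le q hsf (fun _ => normExceptZero_nonneg G)
        fun i _ hr => sum_sq_normExceptZero_le hmono hbound (hsf i) (hq i) hr
end

section
/- Define A(q_1,...,q_k) = ∑ e(∑_{i=1}^k d_i a_i / q_i), where the sum is over tuples (a_1,...,a_k) with 1 ≤ a_i ≤ q_i, gcd(a_i, q_i) = 1, and ∑ a_i/q_i ∈ ℤ, and e(θ) = exp(2πiθ). If q_i = q_i' q_i'' for each i with gcd(∏ q_i', ∏ q_i'') = 1, then A(q_1,...,q_k) = A(q_1',...,q_k')·A(q_1'',...,q_k''). -/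
open Finset

/-- The Hardy–Littlewood exponential sum `A(q₁,…,q_k)` attached to the tuple `d`. -/
noncomputable def HLA (k : ℕ) (d : Fin k → ℤ) (q : Fin k → ℕ) : ℂ :=
  ∑ a ∈ (Fintype.piFinset fun i => Finset.Icc 1 (q i)).filter
      (fun a => (∀ i, Nat.gcd (a i) (q i) = 1) ∧ (∑ i, (a i : ℚ) / (q i : ℚ)).den = 1),
    Complex.exp (2 * Real.pi * Complex.I * ∑ i, (d i : ℂ) * (a i : ℂ) / (q i : ℂ))

/-!
Reading each numerator `aᵢ` in `ZMod qᵢ`, both the summand and the condition `∑ aᵢ/qᵢ ∈ ℤ`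
depend only on the points `aᵢ/qᵢ` of `ℝ/ℤ`. For coprime `m, n` the map
`(a, b) ↦ a n + b m` is a bijection `ZMod m × ZMod n → ZMod (m n)` that preserves units and
satisfies `(a n + b m)/(m n) = a/m + b/n`, so the sum for `q' q''` is a double sum over the
pairs of tuples. The integrality condition splits as well: the two partial sums `t'`, `t''` in
`ℝ/ℤ` are killed by `∏ q'ᵢ` and `∏ q''ᵢ` respectively, so for coprime products `t' + t'' = 0`
forces `t' = t'' = 0`.
-/

namespace ZMod

variable {m n : ℕ}

lemma isUnit_iff_isUnit_castHom_mul [NeZero m] [NeZero n] {y : ZMod (m * n)} :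
    IsUnit y ↔ IsUnit (castHom (dvd_mul_right m n) (ZMod m) y) ∧
      IsUnit (castHom (dvd_mul_left n m) (ZMod n) y) := by
  rw [← natCast_zmod_val y, map_natCast, map_natCast, isUnit_iff_coprime, isUnit_iff_coprime,
    isUnit_iff_coprime, Nat.coprime_mul_iff_right]

-- The numerator of `a/m + b/n` over the denominator `m n`.
def crtCombine (m n : ℕ) (p : ZMod m × ZMod n) : ZMod (m * n) :=
  ((p.1.val * n + p.2.val * m : ℕ) : ZMod (m * n))

lemma castHom_crtCombine_left [NeZero m] (p : ZMod m × ZMod n) :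
    castHom (dvd_mul_right m n) (ZMod m) (crtCombine m n p) = p.1 * n := by
  simp [crtCombine, -natCast_val, natCast_zmod_val]

lemma castHom_crtCombine_right [NeZero n] (p : ZMod m × ZMod n) :
    castHom (dvd_mul_left n m) (ZMod n) (crtCombine m n p) = p.2 * m := by
  simp [crtCombine, -natCast_val, natCast_zmod_val]

lemma isUnit_crtCombine_iff [NeZero m] [NeZero n] (h : m.Coprime n) (p : ZMod m × ZMod n) :
    IsUnit (crtCombine m n p) ↔ IsUnit p.1 ∧ IsUnit p.2 := by
  rw [isUnit_iff_isUnit_castHom_mul, castHom_crtCombine_left, castHom_crtCombine_right,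
    IsUnit.mul_iff, IsUnit.mul_iff, isUnit_iff_coprime, isUnit_iff_coprime,
    and_iff_left h.symm, and_iff_left h]

lemma crtCombine_bijective [NeZero m] [NeZero n] (h : m.Coprime n) :
    Function.Bijective (crtCombine m n) := by
  have hn : IsUnit (n : ZMod m) := (isUnit_iff_coprime n m).mpr h.symm
  have hm : IsUnit (m : ZMod n) := (isUnit_iff_coprime m n).mpr h
  refine (Fintype.bijective_iff_injective_and_card _).mpr ⟨fun p r hpr => ?_, by simp⟩
  have h₁ := congrArg (castHom (dvd_mul_right m n) (ZMod m)) hpr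
  have h₂ := congrArg (castHom (dvd_mul_left n m) (ZMod n)) hpr
  rw [castHom_crtCombine_left, castHom_crtCombine_left] at h₁
  rw [castHom_crtCombine_right, castHom_crtCombine_right] at h₂
  exact Prod.ext (hn.mul_right_cancel h₁) (hm.mul_right_cancel h₂)

lemma toAddCircle_crtCombine [NeZero m] [NeZero n] (p : ZMod m × ZMod n) :
    toAddCircle (crtCombine m n p) = toAddCircle p.1 + toAddCircle p.2 := by
  rw [crtCombine, toAddCircle_natCast, toAddCircle_apply, toAddCircle_apply, ← AddCircle.coe_add]
  congr 1
  have : (m : ℝ) ≠ 0 := NeZero.ne _ |> Nat.cast_ne_zero.mpr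
  have : (n : ℝ) ≠ 0 := NeZero.ne _ |> Nat.cast_ne_zero.mpr
  push_cast
  field_simp

end ZMod

lemma AddCircle.coe_ratCast_eq_zero_iff (r : ℚ) : ((r : ℝ) : UnitAddCircle) = 0 ↔ r.den = 1 := by
  rw [AddCircle.coe_eq_zero_iff, Rat.den_eq_one_iff]
  constructor
  · rintro ⟨n, hn⟩
    have : r = n := by exact_mod_cast (by simpa using hn.symm : (r : ℝ) = n)
    rw [this, Rat.num_intCast]
  · exact fun h => ⟨r.num, by rw [zsmul_one]; exact_mod_cast h⟩

lemma AddCircle.sum_zsmul_coe {ι : Type*} (s : Finset ι) (c : ι → ℤ) (x : ι → ℝ) :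
    ∑ i ∈ s, c i • (x i : UnitAddCircle) = ((∑ i ∈ s, c i * x i : ℝ) : UnitAddCircle) := by
  simp_rw [← AddCircle.coe_zsmul, zsmul_eq_mul]
  exact (map_sum (QuotientAddGroup.mk' (AddSubgroup.zmultiples (1 : ℝ))) _ _).symm

lemma AddCommGroup.add_eq_zero_iff_of_coprime {G : Type*} [AddCommGroup G] {s t : G} {m n : ℕ}
    (hmn : m.Coprime n) (hs : m • s = 0) (ht : n • t = 0) : s + t = 0 ↔ s = 0 ∧ t = 0 := by
  refine ⟨fun h => ?_, fun h => by rw [h.1, h.2, add_zero]⟩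
  have hts : t = -s := eq_neg_of_add_eq_zero_right h
  have hns : n • s = 0 := by rw [hts, smul_neg, neg_eq_zero] at ht; exact ht
  have hs0 : s = 0 := by
    simpa [hmn] using Nat.dvd_gcd (addOrderOf_dvd_of_nsmul_eq_zero hs)
      (addOrderOf_dvd_of_nsmul_eq_zero hns)
  exact ⟨hs0, by rw [hts, hs0, neg_zero]⟩

open ZMod

lemma Complex.exp_two_pi_I_mul_eq_toCircle (x : ℝ) :
    Complex.exp (2 * Real.pi * Complex.I * x) = AddCircle.toCircle (x : UnitAddCircle) := by
  rw [AddCircle.toCircle_apply_mk, Circle.coe_exp]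
  push_cast
  ring_nf

lemma Finset.sum_piFinset_Icc_natCast {ι M : Type*} [Fintype ι] [DecidableEq ι]
    [AddCommMonoid M] (q : ι → ℕ) [∀ i, NeZero (q i)] (F : (∀ i, ZMod (q i)) → M) :
    ∑ a ∈ Fintype.piFinset (fun i => Icc 1 (q i)), F (fun i => (a i : ZMod (q i))) = ∑ x, F x := by
  refine sum_nbij' (fun a i => (a i : ZMod (q i))) (fun x i => (x i - 1).val + 1)
    (by simp) (fun x _ => ?_) (fun a ha => ?_) (fun x _ => ?_) (fun _ _ => rfl)
  · simpa [Nat.succ_le_iff] using fun i => val_lt (x i - 1)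
  · funext i
    have hai := mem_Icc.mp (Fintype.mem_piFinset.mp ha i)
    have : (a i : ZMod (q i)) - 1 = ((a i - 1 : ℕ) : ZMod (q i)) := by
      rw [Nat.cast_sub hai.1, Nat.cast_one]
    change ((a i : ZMod (q i)) - 1).val + 1 = a i
    rw [this, val_natCast, Nat.mod_eq_of_lt (by omega)]
    omega
  · funext i
    simp

section Phase

variable {ι : Type*} [Fintype ι]

noncomputable def phase {q : ι → ℕ} [∀ i, NeZero (q i)] (c : ι → ℤ) (x : ∀ i, ZMod (q i)) :
    UnitAddCircle :=
  ∑ i, c i • toAddCircle (x i)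

-- `HLA` with `aᵢ` read in `ZMod qᵢ`; `phase 1 x = 0` says `∑ aᵢ/qᵢ ∈ ℤ`.
open Classical in
noncomputable def HLAZMod [DecidableEq ι] (d : ι → ℤ) (q : ι → ℕ) [∀ i, NeZero (q i)] : ℂ :=
  ∑ x : ∀ i, ZMod (q i) with (∀ i, IsUnit (x i)) ∧ phase 1 x = 0,
    (AddCircle.toCircle (phase d x) : ℂ)

variable {q : ι → ℕ} [∀ i, NeZero (q i)]

lemma phase_natCast (c : ι → ℤ) (a : ι → ℕ) :
    phase c (fun i => (a i : ZMod (q i))) = ((∑ i, c i * (a i / q i : ℝ) : ℝ) : UnitAddCircle) := by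
  simp only [phase, toAddCircle_natCast, AddCircle.sum_zsmul_coe]

lemma prod_nsmul_phase_eq_zero (c : ι → ℤ) (x : ∀ i, ZMod (q i)) : (∏ i, q i) • phase c x = 0 := by
  rw [phase, Finset.smul_sum]
  refine Finset.sum_eq_zero fun i _ => ?_
  obtain ⟨r, hr⟩ := dvd_prod_of_mem q (mem_univ i)
  have hq : q i • toAddCircle (x i) = 0 := by
    rw [← map_nsmul, nsmul_eq_mul, natCast_self, zero_mul, map_zero]
  rw [hr, mul_nsmul, smul_comm (q i) (c i), hq, smul_zero, smul_zero]

lemma phase_crtCombine {q' q'' : ι → ℕ} [∀ i, NeZero (q' i)] [∀ i, NeZero (q'' i)] (c : ι → ℤ)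
    (x' : ∀ i, ZMod (q' i)) (x'' : ∀ i, ZMod (q'' i)) :
    phase c (fun i => crtCombine (q' i) (q'' i) (x' i, x'' i)) = phase c x' + phase c x'' := by
  simp only [phase, toAddCircle_crtCombine, smul_add, Finset.sum_add_distrib]

lemma HLAZMod_mul [DecidableEq ι] {q' q'' : ι → ℕ} [∀ i, NeZero (q' i)] [∀ i, NeZero (q'' i)]
    (d : ι → ℤ) (hcop : (∏ i, q' i).Coprime (∏ i, q'' i)) :
    HLAZMod d (fun i => q' i * q'' i) = HLAZMod d q' * HLAZMod d q'' := by
  have hc (i : ι) : (q' i).Coprime (q'' i) :=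
    (hcop.coprime_dvd_left (dvd_prod_of_mem _ (mem_univ i))).coprime_dvd_right
      (dvd_prod_of_mem _ (mem_univ i))
  let e : (∀ i, ZMod (q' i)) × (∀ i, ZMod (q'' i)) ≃ ∀ i, ZMod (q' i * q'' i) :=
    (Equiv.arrowProdEquivProdArrow _ _ _).symm.trans
      (Equiv.piCongrRight fun i => Equiv.ofBijective _ (crtCombine_bijective (hc i)))
  have he (p) : e p = fun i => crtCombine (q' i) (q'' i) (p.1 i, p.2 i) := rfl
  unfold HLAZMod
  rw [sum_mul_sum, ← sum_product']
  refine (sum_equiv e (fun p => ?_) (fun p _ => ?_)).symm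
  · simp only [mem_product, mem_filter, mem_univ, true_and, he, phase_crtCombine,
      isUnit_crtCombine_iff (hc _), forall_and,
      AddCommGroup.add_eq_zero_iff_of_coprime hcop (prod_nsmul_phase_eq_zero 1 p.1)
        (prod_nsmul_phase_eq_zero 1 p.2)]
    tauto
  · rw [he, phase_crtCombine, AddCircle.toCircle_add, Circle.coe_mul]

end Phase

lemma HLA_eq_HLAZMod (k : ℕ) (d : Fin k → ℤ) (q : Fin k → ℕ) [∀ i, NeZero (q i)] :
    HLA k d q = HLAZMod d q := by
  unfold HLA HLAZMod
  rw [sum_filter, sum_filter]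
  refine Eq.trans (sum_congr rfl fun a _ => ?_) (sum_piFinset_Icc_natCast q _)
  have hunit : (∀ i, Nat.gcd (a i) (q i) = 1) ↔ ∀ i, IsUnit (a i : ZMod (q i)) := by
    simp only [isUnit_iff_coprime, Nat.Coprime]
  have hint : (∑ i, (a i : ℚ) / q i).den = 1 ↔ phase 1 (fun i => (a i : ZMod (q i))) = 0 := by
    rw [phase_natCast, ← AddCircle.coe_ratCast_eq_zero_iff]
    push_cast
    simp
  have hexp : Complex.exp (2 * Real.pi * Complex.I * ∑ i, (d i : ℂ) * (a i : ℂ) / (q i : ℂ)) =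
      AddCircle.toCircle (phase d (fun i => (a i : ZMod (q i)))) := by
    rw [phase_natCast, ← Complex.exp_two_pi_I_mul_eq_toCircle]
    push_cast
    simp only [mul_div_assoc]
  simp only [hunit, hint, hexp]
  congr

/-- Multiplicativity of `A` (Lemma 3, equation (35)). -/
theorem stmt_2 (k : ℕ) (d : Fin k → ℤ) (q q' q'' : Fin k → ℕ)
    (hq' : ∀ i, 0 < q' i) (hq'' : ∀ i, 0 < q'' i)
    (hfac : ∀ i, q i = q' i * q'' i)
    (hcop : Nat.Coprime (∏ i, q' i) (∏ i, q'' i)) :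
    HLA k d q = HLA k d q' * HLA k d q'' := by
  obtain rfl : q = fun i => q' i * q'' i := funext hfac
  have := fun i => NeZero.of_pos (hq' i)
  have := fun i => NeZero.of_pos (hq'' i)
  rw [HLA_eq_HLAZMod, HLA_eq_HLAZMod, HLA_eq_HLAZMod, HLAZMod_mul d hcop]
end

section
/- For any prime p and distinct integers d_1,...,d_k, ∑ (∏_{i=1}^k μ(q_i)/φ(q_i)) A(q_1,...,q_k) = (1 - 1/p)^{-k} (1 - ν_p(D)/p), where the sum is over tuples (q_1,...,q_k) with each q_i dividing p (i.e., q_i ∈ {1, p}), and ν_p(D) is the number of distinct residue classes mod p among d_1,...,d_k. -/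
/-!
Detecting the condition `∑ aᵢ/qᵢ ∈ ℤ` by the character sum over `t mod Q` (for any common multiple
`Q` of the `qᵢ`) factors `A(q)` as `Q⁻¹ ∑_t ∏ᵢ c_{qᵢ}(dᵢ + t)`, with Ramanujan sums `c_1 = 1` and
`c_p(m) = p·[p ∣ m] - 1`. For `Q = p` the sum over `q` then factors coordinatewise, and the local
factor `1 - c_p(dᵢ + t)/(p - 1)` is `0` when `p ∣ dᵢ + t` and `(1 - 1/p)⁻¹` otherwise. What remains is
`(1 - 1/p)⁻ᵏ/p` times the number of `t mod p` avoiding every `-dᵢ`, namely `p - ν_p(D)`.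
-/

open Finset

open Complex
open scoped Real

lemma sum_range_exp_mul_div_eq_ite {n : ℕ} (hn : n ≠ 0) (m : ℤ) :
    ∑ t ∈ range n, exp (2 * π * I * (t * m / n)) = if (n : ℤ) ∣ m then (n : ℂ) else 0 := by
  have hζ := isPrimitiveRoot_exp n hn
  obtain ⟨η, hη_def⟩ : ∃ η, η = exp (2 * π * I / n) ^ m := ⟨_, rfl⟩
  have hηn : η ^ n = 1 := by
    rw [hη_def, ← zpow_natCast, ← zpow_mul, mul_comm m, zpow_mul, zpow_natCast, hζ.pow_eq_one,
      one_zpow]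
  have hterm (t : ℕ) : exp (2 * π * I * (t * m / n)) = η ^ t := by
    rw [hη_def, ← zpow_natCast, ← zpow_mul, ← exp_int_mul]
    push_cast
    ring_nf
  simp_rw [hterm]
  split_ifs with h
  · simp [hη_def, (hζ.zpow_eq_one_iff_dvd m).2 h]
  · have hη : η ≠ 1 := fun h' => h ((hζ.zpow_eq_one_iff_dvd m).1 (hη_def ▸ h'))
    rw [geom_sum_eq hη, hηn, sub_self, zero_div]

noncomputable def ramanujanSum (q : ℕ) (m : ℤ) : ℂ :=
  ∑ a ∈ (Icc 1 q).filter (fun a => Nat.gcd a q = 1), exp (2 * π * I * (a * m / q))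

lemma ramanujanSum_one (m : ℤ) : ramanujanSum 1 m = 1 := by
  simpa [ramanujanSum, mul_comm] using exp_int_mul_two_pi_mul_I m

lemma ramanujanSum_prime {p : ℕ} (hp : p.Prime) (m : ℤ) :
    ramanujanSum p m = (if (p : ℤ) ∣ m then (p : ℂ) else 0) - 1 := by
  have hunits : (Icc 1 p).filter (fun a => Nat.gcd a p = 1) = Ico 1 p := by
    ext a
    simp only [mem_filter, mem_Icc, mem_Ico, ← Nat.coprime_iff_gcd_eq_one, Nat.coprime_comm,
      hp.coprime_iff_not_dvd]
    constructor
    · rintro ⟨⟨ha1, hap⟩, hndvd⟩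
      exact ⟨ha1, lt_of_le_of_ne hap fun h => hndvd (h ▸ dvd_rfl)⟩
    · rintro ⟨ha1, hap⟩
      exact ⟨⟨ha1, hap.le⟩, Nat.not_dvd_of_pos_of_lt ha1 hap⟩
  rw [ramanujanSum, hunits, ← sum_range_exp_mul_div_eq_ite hp.ne_zero, range_eq_Ico,
    sum_eq_sum_Ico_succ_bot hp.pos]
  simp

lemma sum_divisors_prime_moebius_div_totient_mul_ramanujanSum {p : ℕ} (hp : p.Prime) (m : ℤ) :
    ∑ q ∈ p.divisors,
      ((ArithmeticFunction.moebius q : ℤ) : ℂ) / (Nat.totient q : ℂ) * ramanujanSum q m =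
    if ¬ (p : ℤ) ∣ m then (1 - (p : ℂ)⁻¹)⁻¹ else 0 := by
  have hp0 : (p : ℂ) ≠ 0 := by exact_mod_cast hp.ne_zero
  have hp1 : (p : ℂ) - 1 ≠ 0 := sub_ne_zero.2 (by exact_mod_cast hp.ne_one)
  rw [hp.divisors, sum_insert (by simpa using hp.ne_one.symm), sum_singleton, ramanujanSum_one,
    ramanujanSum_prime hp, ArithmeticFunction.moebius_apply_prime hp, Nat.totient_prime hp,
    Nat.cast_sub hp.one_le, ArithmeticFunction.moebius_apply_one, Nat.totient_one]
  push_cast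
  split_ifs <;> field_simp <;> ring

lemma card_filter_range_forall_not_dvd {ι : Type*} [Fintype ι] (p : ℕ) [NeZero p] (d : ι → ℤ)
    [DecidablePred fun t : ℕ => ∀ i, ¬ (p : ℤ) ∣ d i + t] :
    #((range p).filter fun t : ℕ => ∀ i, ¬ (p : ℤ) ∣ d i + t) =
      p - #(univ.image fun i => (d i : ZMod p)) := by
  have hbij : #((range p).filter fun t : ℕ => ∀ i, ¬ (p : ℤ) ∣ d i + t) =
      #(univ \ univ.image fun i => (d i : ZMod p)) := by
    have hdvd (i : ι) (t : ℕ) : (p : ℤ) ∣ d i + t ↔ (d i : ZMod p) = -(t : ZMod p) := by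
      rw [← ZMod.intCast_zmod_eq_zero_iff_dvd, Int.cast_add, Int.cast_natCast,
        add_eq_zero_iff_eq_neg]
    refine card_nbij' (fun t => -(t : ZMod p)) (fun u => (-u).val) ?_ ?_ ?_ ?_ <;> intro x hx <;>
      simp_all [ZMod.val_lt, Nat.mod_eq_of_lt]
  rw [hbij, card_sdiff_of_subset (subset_univ _), card_univ, ZMod.card]

lemma sum_natCast_div_eq_div {K ι : Type*} [Field K] [CharZero K] [Fintype ι] {Q : ℕ}
    (hQ : Q ≠ 0) (a q : ι → ℕ) (hq : ∀ i, q i ∣ Q) :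
    ∑ i, (a i : K) / q i = ((∑ i, a i * (Q / q i) : ℕ) : K) / Q := by
  rw [eq_div_iff (by exact_mod_cast hQ), sum_mul]
  push_cast
  refine sum_congr rfl fun i _ => ?_
  rw [Nat.cast_div (hq i) (Nat.cast_ne_zero.2 (ne_zero_of_dvd_ne_zero hQ (hq i)))]
  field_simp

lemma HLA_eq_sum_range_prod_ramanujanSum (k : ℕ) (d : Fin k → ℤ) (q : Fin k → ℕ) {Q : ℕ}
    (hQ : Q ≠ 0) (hq : ∀ i, q i ∣ Q) :
    HLA k d q = (Q : ℂ)⁻¹ * ∑ t ∈ range Q, ∏ i, ramanujanSum (q i) (d i + t) := by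
  set M : (Fin k → ℕ) → ℕ := fun a => ∑ i, a i * (Q / q i) with hM
  have hset : (Fintype.piFinset fun i => Icc 1 (q i)).filter
      (fun a => (∀ i, Nat.gcd (a i) (q i) = 1) ∧ (∑ i, (a i : ℚ) / (q i : ℚ)).den = 1) =
      (Fintype.piFinset fun i => (Icc 1 (q i)).filter fun b => Nat.gcd b (q i) = 1).filter
        fun a => (Q : ℤ) ∣ (M a : ℤ) := by
    ext a
    simp only [mem_filter, Fintype.mem_piFinset, forall_and, and_assoc,
      sum_natCast_div_eq_div hQ a q hq, Rat.den_div_natCast_eq_one_iff _ _ hQ, hM,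
      Int.natCast_dvd_natCast]
  have hdetect (a : Fin k → ℕ) (z : ℂ) : (if (Q : ℤ) ∣ (M a : ℤ) then z else 0) =
      (Q : ℂ)⁻¹ * ∑ t ∈ range Q, exp (2 * π * I * (t * (M a : ℤ) / Q)) * z := by
    rw [← sum_mul, sum_range_exp_mul_div_eq_ite hQ]
    split_ifs
    · field_simp
    · simp
  have hsplit (a : Fin k → ℕ) (t : ℕ) :
      exp (2 * π * I * (t * (M a : ℤ) / Q)) *
        exp (2 * π * I * ∑ i, (d i : ℂ) * (a i : ℂ) / (q i : ℂ)) =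
      ∏ i, exp (2 * π * I * (a i * ((d i + t : ℤ) : ℂ) / q i)) := by
    rw [← exp_add, ← exp_sum, Int.cast_natCast, mul_div_assoc, hM,
      ← sum_natCast_div_eq_div hQ a q hq]
    congr 1
    simp only [mul_sum, ← Finset.sum_add_distrib]
    refine sum_congr rfl fun i _ => ?_
    push_cast
    ring
  rw [HLA, hset, sum_filter]
  simp_rw [hdetect, hsplit, ← mul_sum]
  rw [sum_comm]
  congr 1
  refine sum_congr rfl fun t _ => ?_
  simp only [ramanujanSum, prod_univ_sum]

theorem stmt_3_general (k : ℕ) (d : Fin k → ℤ)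
    (p : ℕ) (hp : p.Prime) :
    ∑ q ∈ Fintype.piFinset (fun _ : Fin k => p.divisors),
      (∏ i, ((ArithmeticFunction.moebius (q i) : ℤ) : ℂ) / (Nat.totient (q i) : ℂ)) *
        HLA k d q =
    (1 - (p : ℂ)⁻¹)⁻¹ ^ k *
      (1 - ((Finset.univ.image fun i => ((d i : ZMod p))).card : ℂ) / (p : ℂ)) := by
  have : NeZero p := ⟨hp.ne_zero⟩
  have hHLA (q : Fin k → ℕ) (hq : q ∈ Fintype.piFinset fun _ => p.divisors) :=
    HLA_eq_sum_range_prod_ramanujanSum k d q hp.ne_zero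
      fun i => Nat.dvd_of_mem_divisors (Fintype.mem_piFinset.1 hq i)
  have hlocal (t : ℕ) : ∏ i, ∑ q ∈ p.divisors,
      ((ArithmeticFunction.moebius q : ℤ) : ℂ) / (Nat.totient q : ℂ) * ramanujanSum q (d i + t) =
      if ∀ i, ¬ (p : ℤ) ∣ d i + t then (1 - (p : ℂ)⁻¹)⁻¹ ^ k else 0 := by
    simp only [sum_divisors_prime_moebius_div_totient_mul_ramanujanSum hp, Fintype.prod_ite_zero, prod_const,
      card_univ, Fintype.card_fin]
  calc _ = (p : ℂ)⁻¹ * ∑ t ∈ range p, ∏ i, ∑ q ∈ p.divisors,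
        ((ArithmeticFunction.moebius q : ℤ) : ℂ) / (Nat.totient q : ℂ) *
          ramanujanSum q (d i + t) := by
        rw [sum_congr rfl fun q hq => congrArg _ (hHLA q hq)]
        simp only [prod_univ_sum, mul_sum, prod_mul_distrib]
        rw [sum_comm]
        exact sum_congr rfl fun _ _ => sum_congr rfl fun _ _ => mul_left_comm _ _ _
    _ = (p : ℂ)⁻¹ * (#((range p).filter fun t : ℕ => ∀ i, ¬ (p : ℤ) ∣ d i + t) *
        (1 - (p : ℂ)⁻¹)⁻¹ ^ k) := by
        rw [sum_congr rfl fun t _ => hlocal t, ← sum_filter, sum_const, nsmul_eq_mul]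
    _ = _ := by
        have hν := (card_le_univ (univ.image fun i => (d i : ZMod p))).trans_eq (ZMod.card p)
        have hp0 : (p : ℂ) ≠ 0 := by exact_mod_cast hp.ne_zero
        rw [card_filter_range_forall_not_dvd, Nat.cast_sub hν]
        field_simp

/-- Lemma 3, equation (36): the local evaluation of the singular series at `p`. -/
theorem stmt_3 (k : ℕ) (d : Fin k → ℤ) (hd : Function.Injective d)
    (p : ℕ) (hp : p.Prime) :
    ∑ q ∈ Fintype.piFinset (fun _ : Fin k => p.divisors),
      (∏ i, ((ArithmeticFunction.moebius (q i) : ℤ) : ℂ) / (Nat.totient (q i) : ℂ)) *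
        HLA k d q =
    (1 - (p : ℂ)⁻¹)⁻¹ ^ k *
      (1 - ((Finset.univ.image fun i => ((d i : ZMod p))).card : ℂ) / (p : ℂ)) :=
  stmt_3_general k d p hp
end

section
/- Define the singular series 𝔖(D) for a finite set D of integers as the (convergent) product over all primes p of (1 - 1/p)^{-k}(1 - ν_p(D)/p), where k = card D and ν_p(D) is the number of distinct residue classes mod p among the elements of D. If all elements of D lie in [1, h] with h ≥ 2, then 𝔖(D) = O_k((log h)^{k-1}). -/
/-!
By Bernoulli's inequality `1 - ν/p ≤ (1 - 1/p)^ν`, the Euler factor at `p` is at most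
`(1 - 1/p)^{-(k - ν_p(D))}`, hence at most `(1 - 1/p)^{-(k-1)}`; for `p > h` the elements of `D`
are distinct modulo `p`, so `ν_p(D) = k` and the factor is at most `1`. Every partial product is
therefore at most `(∏_{p ≤ h} (1 - 1/p)⁻¹)^{k-1}`, and it remains to prove the weak Mertens bound
`∏_{p ≤ h} (1 - 1/p)⁻¹ ≪ log h`. Writing `(1 - 1/p)⁻¹ ≤ exp (1/p + 1/(p(p-1)))`, this reduces to
`∑_{p ≤ h} 1/p ≤ log log h + O(1)`, which follows by partial summation from
`∑_{p ≤ n} log p / p ≤ log n + log 4`; the latter comes from `∏_{p ≤ n} p^⌊n/p⌋ ∣ n!` together with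
Chebyshev's bound `θ(n) ≤ n log 4`.
-/

open Finset Real
open scoped Nat

theorem Nat.Prime.pow_div_dvd_factorial {p : ℕ} (hp : p.Prime) (n : ℕ) :
    p ^ (n / p) ∣ n ! := by
  have : p ^ (n / p) ∣ (p * (n / p))! := by
    rw [pow_dvd_iff_le_emultiplicity, hp.emultiplicity_factorial_mul]
    exact le_add_self
  exact this.trans (Nat.factorial_dvd_factorial (Nat.mul_div_le n p))

theorem Nat.prod_primesLE_pow_div_dvd_factorial (n : ℕ) :
    ∏ p ∈ Nat.primesLE n, p ^ (n / p) ∣ n ! :=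
  Finset.prod_dvd_of_isRelPrime
    (fun _ hp _ hq hpq => Nat.coprime_iff_isRelPrime.1 <| Nat.Coprime.pow _ _ <|
      (Nat.coprime_primes (Nat.prime_of_mem_primesLE hp) (Nat.prime_of_mem_primesLE hq)).2 hpq)
    fun _ hp => (Nat.prime_of_mem_primesLE hp).pow_div_dvd_factorial n

theorem sum_primesLE_log_div_le (n : ℕ) :
    ∑ p ∈ Nat.primesLE n, log p / p ≤ log n + log 4 := by
  rcases n.eq_zero_or_pos with rfl | hn
  · simp only [Nat.primesLE_zero, sum_empty, CharP.cast_eq_zero, log_zero, zero_add]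
    positivity
  have hlog_factorial : ∑ p ∈ Nat.primesLE n, ((n / p : ℕ) : ℝ) * log p ≤ n * log n :=
    calc ∑ p ∈ Nat.primesLE n, ((n / p : ℕ) : ℝ) * log p
        = log ((∏ p ∈ Nat.primesLE n, p ^ (n / p) : ℕ) : ℝ) := by
          push_cast
          rw [log_prod fun p hp => by
            have := (Nat.prime_of_mem_primesLE hp).pos
            positivity]
          simp only [log_pow]
      _ ≤ log (n ! : ℝ) := by
          refine log_le_log ?_ ?_
          · exact_mod_cast prod_pos fun p hp => pow_pos (Nat.prime_of_mem_primesLE hp).pos _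
          · exact_mod_cast Nat.le_of_dvd n.factorial_pos (n.prod_primesLE_pow_div_dvd_factorial)
      _ ≤ log ((n : ℝ) ^ n) := log_le_log (by positivity) (by exact_mod_cast n.factorial_le_pow)
      _ = n * log n := log_pow n n
  have hterm :
      ∀ p ∈ Nat.primesLE n, n * (log p / p) ≤ ((n / p : ℕ) : ℝ) * log p + log p := by
    intro p hp
    have hp0 : (0 : ℝ) < p := by exact_mod_cast (Nat.prime_of_mem_primesLE hp).pos
    have hfloor : (n : ℝ) / p ≤ (n / p : ℕ) + 1 := by
      rw [← Nat.floor_div_eq_div (K := ℝ)]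
      exact (Nat.lt_floor_add_one _).le
    calc (n : ℝ) * (log p / p) = n / p * log p := by ring
      _ ≤ ((n / p : ℕ) + 1) * log p := by gcongr
      _ = ((n / p : ℕ) : ℝ) * log p + log p := by ring
  have htheta : ∑ p ∈ Nat.primesLE n, log p ≤ n * log 4 := by
    rw [← Chebyshev.theta_eq_sum_primesLE_log, mul_comm]
    exact Chebyshev.theta_le_log4_mul_x n.cast_nonneg
  have hsum := Finset.sum_le_sum hterm
  rw [← Finset.mul_sum, Finset.sum_add_distrib] at hsum
  have hn' : (0 : ℝ) < n := by exact_mod_cast hn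
  rw [← mul_le_mul_iff_right₀ hn', mul_add]
  linarith

theorem sum_Icc_div_log_le_of_sum_Icc_le {a : ℕ → ℝ} {c : ℝ}
    (ha : ∀ n, 2 ≤ n → ∑ m ∈ Icc 2 n, a m ≤ log n + c) {n : ℕ} (hn : 2 ≤ n) :
    ∑ m ∈ Icc 2 n, a m / log m ≤ log (log n) + 1 + c / log 2 - log (log 2) := by
  -- Discrete partial summation: `(∑ a - c) / log n` is the boundary term.
  suffices key : ∑ m ∈ Icc 2 n, a m / log m ≤
      (∑ m ∈ Icc 2 n, a m - c) / log n + log (log n) + c / log 2 - log (log 2) by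
    have hlog : 0 < log n := log_pos (by exact_mod_cast hn)
    have : (∑ m ∈ Icc 2 n, a m - c) / log n ≤ 1 := by
      rw [div_le_one hlog]
      linarith [ha n hn]
    linarith
  induction n, hn using Nat.le_induction with
  | base =>
    simp only [Icc_self, sum_singleton, Nat.cast_ofNat]
    exact le_of_eq (by ring)
  | succ n hn ih =>
    set A := ∑ m ∈ Icc 2 n, a m
    set L := log n
    set L' := log ((n + 1 : ℕ) : ℝ)
    have hL : 0 < L := log_pos (by exact_mod_cast hn)
    have hLL' : L ≤ L' := log_le_log (by positivity) (by exact_mod_cast n.le_succ)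
    have hL' : 0 < L' := hL.trans_le hLL'
    have hstep : (A - c) * (L⁻¹ - L'⁻¹) ≤ log L' - log L :=
      calc (A - c) * (L⁻¹ - L'⁻¹) ≤ L * (L⁻¹ - L'⁻¹) :=
            mul_le_mul_of_nonneg_right (by linarith [ha n hn])
              (sub_nonneg.2 (inv_anti₀ hL hLL'))
        _ = 1 - (L' / L)⁻¹ := by field_simp
        _ ≤ log (L' / L) := one_sub_inv_le_log_of_pos (by positivity)
        _ = log L' - log L := log_div (by positivity) hL.ne'
    rw [sum_Icc_succ_top (by omega), sum_Icc_succ_top (by omega)]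
    have e₁ : (A + a (n + 1) - c) / L' = (A - c) / L' + a (n + 1) / L' := by ring
    have e₂ : (A - c) * (L⁻¹ - L'⁻¹) = (A - c) / L - (A - c) / L' := by ring
    linarith

theorem sum_primesLE_inv_le {n : ℕ} (hn : 2 ≤ n) :
    ∑ p ∈ Nat.primesLE n, (p : ℝ)⁻¹ ≤ log (log n) + 3 - log (log 2) := by
  have hsum (g : ℕ → ℝ) (N : ℕ) :
      ∑ m ∈ Icc 2 N, (if m.Prime then g m else 0) = ∑ p ∈ Nat.primesLE N, g p := by
    rw [Nat.primesLE_eq_filter_Icc_two, sum_filter]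
  have h := sum_Icc_div_log_le_of_sum_Icc_le (a := fun m => if m.Prime then log m / m else 0)
    (fun N _ => (hsum _ N).trans_le (sum_primesLE_log_div_le N)) hn
  have hreciprocal : ∑ m ∈ Icc 2 n, (if m.Prime then log m / m else 0) / log m =
      ∑ p ∈ Nat.primesLE n, (p : ℝ)⁻¹ := by
    simp only [ite_div, zero_div, hsum]
    refine sum_congr rfl fun p hp => ?_
    have : log p ≠ 0 := (log_pos (by exact_mod_cast (Nat.prime_of_mem_primesLE hp).one_lt)).ne'
    field_simp
  have hlog4 : log 4 / log 2 = 2 := by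
    rw [show (4 : ℝ) = 2 ^ 2 by norm_num, log_pow]
    field_simp
    norm_num
  linarith

theorem sum_primesLE_inv_mul_sub_one_le (n : ℕ) :
    ∑ p ∈ Nat.primesLE n, (((p : ℝ) - 1) * p)⁻¹ ≤ 1 := by
  set f : ℕ → ℝ := fun m => -((m : ℝ) - 1)⁻¹
  have htelescope :
      ∑ m ∈ Icc 2 n, (((m : ℝ) - 1) * m)⁻¹ = ∑ m ∈ Icc 2 n, (f (m + 1) - f m) := by
    refine sum_congr rfl fun m hm => ?_
    have : (2 : ℝ) ≤ m := by exact_mod_cast (mem_Icc.1 hm).1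
    have : (m : ℝ) - 1 ≠ 0 := by linarith
    have : (m : ℝ) ≠ 0 := by linarith
    simp only [f, Nat.cast_succ, add_sub_cancel_right]
    field_simp
    ring
  calc ∑ p ∈ Nat.primesLE n, (((p : ℝ) - 1) * p)⁻¹
      ≤ ∑ m ∈ Icc 2 n, (((m : ℝ) - 1) * m)⁻¹ := by
        refine sum_le_sum_of_subset_of_nonneg ?_ fun m hm _ => ?_
        · rw [Nat.primesLE_eq_filter_Icc_two]; exact filter_subset _ _
        · have : (2 : ℝ) ≤ m := by exact_mod_cast (mem_Icc.1 hm).1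
          exact inv_nonneg.2 (mul_nonneg (by linarith) (by linarith))
    _ ≤ 1 := by
        rcases lt_or_ge n 2 with hn | hn
        · rw [Icc_eq_empty (by omega), sum_empty]; norm_num
        rw [htelescope, sum_Icc_sub hn]
        simp only [f, Nat.cast_succ, add_sub_cancel_right]
        norm_num

theorem one_le_inv_one_sub_inv {p : ℕ} (hp : 1 < p) : 1 ≤ (1 - (p : ℝ)⁻¹)⁻¹ := by
  have hx : (p : ℝ)⁻¹ < 1 := inv_lt_one_of_one_lt₀ (by exact_mod_cast hp)
  have : 0 < (p : ℝ)⁻¹ := by positivity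
  exact (one_le_inv₀ (by linarith)).2 (by linarith)

theorem prod_primesLE_inv_one_sub_inv_le {n : ℕ} (hn : 2 ≤ n) :
    ∏ p ∈ Nat.primesLE n, (1 - (p : ℝ)⁻¹)⁻¹ ≤ exp 4 / log 2 * log n := by
  have hfactor : ∀ p ∈ Nat.primesLE n,
      (1 - (p : ℝ)⁻¹)⁻¹ ≤ exp ((p : ℝ)⁻¹ + (((p : ℝ) - 1) * p)⁻¹) := by
    intro p hp
    have : (2 : ℝ) ≤ p := by exact_mod_cast (Nat.prime_of_mem_primesLE hp).two_le
    have : (p : ℝ) - 1 ≠ 0 := by linarith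
    have : (p : ℝ) ≠ 0 := by linarith
    calc (1 - (p : ℝ)⁻¹)⁻¹ = (p : ℝ)⁻¹ + (((p : ℝ) - 1) * p)⁻¹ + 1 := by
          field_simp
          ring
      _ ≤ _ := add_one_le_exp _
  have hlog2 : 0 < log 2 := log_pos one_lt_two
  have hlogn : 0 < log n := log_pos (by exact_mod_cast hn)
  calc ∏ p ∈ Nat.primesLE n, (1 - (p : ℝ)⁻¹)⁻¹
      ≤ ∏ p ∈ Nat.primesLE n, exp ((p : ℝ)⁻¹ + (((p : ℝ) - 1) * p)⁻¹) := by
        refine prod_le_prod (fun p hp => ?_) hfactor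
        exact zero_le_one.trans (one_le_inv_one_sub_inv (Nat.prime_of_mem_primesLE hp).one_lt)
    _ = exp (∑ p ∈ Nat.primesLE n, (p : ℝ)⁻¹ +
          ∑ p ∈ Nat.primesLE n, (((p : ℝ) - 1) * p)⁻¹) := by
        rw [← exp_sum, sum_add_distrib]
    _ ≤ exp (log (log n) - log (log 2) + 4) := exp_le_exp.2 <| by
        linarith [sum_primesLE_inv_le hn, sum_primesLE_inv_mul_sub_one_le n]
    _ = exp 4 / log 2 * log n := by
        rw [exp_add, exp_sub, exp_log hlogn, exp_log hlog2]
        ring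

theorem inv_one_sub_pow_mul_one_sub_le {x : ℝ} (hx : x < 1) {ν k : ℕ} (hνk : ν ≤ k) :
    (1 - x)⁻¹ ^ k * (1 - ν * x) ≤ (1 - x)⁻¹ ^ (k - ν) := by
  have hbernoulli : 1 - ν * x ≤ (1 - x) ^ ν := by
    simpa [← sub_eq_add_neg] using one_add_mul_le_pow (a := -x) (by linarith) ν
  have hx' : 1 - x ≠ 0 := by linarith
  calc (1 - x)⁻¹ ^ k * (1 - ν * x) ≤ (1 - x)⁻¹ ^ k * (1 - x) ^ ν :=
        mul_le_mul_of_nonneg_left hbernoulli (pow_nonneg (inv_nonneg.2 (by linarith)) k)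
    _ = (1 - x)⁻¹ ^ (k - ν) := by
        rw [← Nat.sub_add_cancel hνk, pow_add, Nat.add_sub_cancel, mul_assoc, ← mul_pow,
          inv_mul_cancel₀ hx', one_pow, mul_one]

/-- `ν_p(D)`. -/
def numResidues (p : ℕ) (D : Finset ℤ) : ℕ :=
  (D.image fun d : ℤ => (d : ZMod p)).card

noncomputable def eulerFactor (D : Finset ℤ) (p : ℕ) : ℝ :=
  (1 - (p : ℝ)⁻¹)⁻¹ ^ D.card * (1 - (numResidues p D : ℝ) / p)

section EulerFactor

variable {D : Finset ℤ} {p : ℕ}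

theorem numResidues_le (hp : p ≠ 0) : numResidues p D ≤ p := by
  have : NeZero p := ⟨hp⟩
  exact (card_le_univ _).trans (ZMod.card p).le

theorem numResidues_le_card : numResidues p D ≤ D.card := card_image_le

theorem numResidues_pos (hD : D.Nonempty) : 0 < numResidues p D := (hD.image _).card_pos

theorem numResidues_eq_card (hD : ∀ a ∈ D, ∀ b ∈ D, |a - b| < p) :
    numResidues p D = D.card := by
  refine card_image_of_injOn fun a ha b hb hab => ?_
  have hdvd : (p : ℤ) ∣ a - b := (ZMod.intCast_eq_intCast_iff_dvd_sub b a p).1 hab.symm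
  exact sub_eq_zero.1 (Int.eq_zero_of_abs_lt_dvd hdvd (hD a ha b hb))

theorem eulerFactor_nonneg (hp : p ≠ 0) : 0 ≤ eulerFactor D p := by
  have hp1 : (1 : ℝ) ≤ p := by exact_mod_cast Nat.one_le_iff_ne_zero.2 hp
  have hν : (numResidues p D : ℝ) / p ≤ 1 :=
    div_le_one_of_le₀ (by exact_mod_cast numResidues_le hp) (by linarith)
  have : (p : ℝ)⁻¹ ≤ 1 := inv_le_one_of_one_le₀ hp1
  exact mul_nonneg (pow_nonneg (inv_nonneg.2 (by linarith)) _) (by linarith)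

theorem eulerFactor_le_pow (hp : 1 < p) :
    eulerFactor D p ≤ (1 - (p : ℝ)⁻¹)⁻¹ ^ (D.card - numResidues p D) := by
  have hx : (p : ℝ)⁻¹ < 1 := inv_lt_one_of_one_lt₀ (by exact_mod_cast hp)
  simpa [eulerFactor, div_eq_mul_inv] using
    inv_one_sub_pow_mul_one_sub_le hx (numResidues_le_card (p := p) (D := D))

theorem eulerFactor_le (hp : 1 < p) :
    eulerFactor D p ≤ (1 - (p : ℝ)⁻¹)⁻¹ ^ (D.card - 1) := by
  refine (eulerFactor_le_pow hp).trans (pow_le_pow_right₀ (one_le_inv_one_sub_inv hp) ?_)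
  rcases D.eq_empty_or_nonempty with rfl | hD
  · simp
  · have := numResidues_pos (p := p) hD
    omega

theorem eulerFactor_le_one (hp : 1 < p) (hD : ∀ a ∈ D, ∀ b ∈ D, |a - b| < p) :
    eulerFactor D p ≤ 1 := by
  simpa [numResidues_eq_card hD] using eulerFactor_le_pow (D := D) hp

end EulerFactor

theorem Finset.prod_le_prod_of_le_one_of_notMem {ι : Type*} {f g : ι → ℝ} {t : Finset ι}
    (hf : ∀ i, 0 ≤ f i) (hfg : ∀ i ∈ t, f i ≤ g i) (hf_one : ∀ i ∉ t, f i ≤ 1)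
    (hg : ∀ i ∈ t, 1 ≤ g i) (s : Finset ι) : ∏ i ∈ s, f i ≤ ∏ i ∈ t, g i := by
  classical
  rw [← prod_filter_mul_prod_filter_not s (· ∈ t)]
  calc (∏ i ∈ s with i ∈ t, f i) * ∏ i ∈ s with i ∉ t, f i
      ≤ ∏ i ∈ s with i ∈ t, f i :=
        mul_le_of_le_one_right (prod_nonneg fun i _ => hf i)
          (prod_le_one (fun i _ => hf i) fun i hi => hf_one i (mem_filter.1 hi).2)
    _ ≤ ∏ i ∈ s with i ∈ t, g i :=
        prod_le_prod (fun i _ => hf i) fun i hi => hfg i (mem_filter.1 hi).2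
    _ ≤ ∏ i ∈ t, g i :=
        prod_le_prod_of_subset_of_one_le (fun i hi => (mem_filter.1 hi).2)
          (fun i hi => zero_le_one.trans (hg i (mem_filter.1 hi).2)) fun i hi _ => hg i hi

theorem prod_eulerFactor_le {D : Finset ℤ} {h : ℕ} (hD : ∀ d ∈ D, 1 ≤ d ∧ d ≤ (h : ℤ))
    (s : Finset Nat.Primes) :
    ∏ p ∈ s, eulerFactor D p ≤ (∏ p ∈ Nat.primesLE h, (1 - (p : ℝ)⁻¹)⁻¹) ^ (D.card - 1) := by
  let smallPrimes : Finset Nat.Primes := (Nat.primesLE h).subtype Nat.Prime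
  have hdiam (p : Nat.Primes) (hp : p ∉ smallPrimes) : ∀ a ∈ D, ∀ b ∈ D, |a - b| < p := by
    have hph : (h : ℤ) < p := by
      have : ¬ (p : ℕ) ≤ h := fun hle =>
        hp (mem_subtype.2 (Nat.mem_primesLE.2 ⟨hle, p.prop⟩))
      omega
    intro a ha b hb
    have := hD a ha
    have := hD b hb
    rw [abs_lt]
    omega
  calc ∏ p ∈ s, eulerFactor D p
      ≤ ∏ p ∈ smallPrimes, (1 - ((p : ℕ) : ℝ)⁻¹)⁻¹ ^ (D.card - 1) :=
        prod_le_prod_of_le_one_of_notMem (fun p => eulerFactor_nonneg p.prop.ne_zero)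
          (fun p _ => eulerFactor_le p.prop.one_lt)
          (fun p hp => eulerFactor_le_one p.prop.one_lt (hdiam p hp))
          (fun p _ => one_le_pow₀ (one_le_inv_one_sub_inv p.prop.one_lt)) s
    _ = ∏ p ∈ Nat.primesLE h, (1 - (p : ℝ)⁻¹)⁻¹ ^ (D.card - 1) :=
        prod_subtype_of_mem (fun p : ℕ => (1 - (p : ℝ)⁻¹)⁻¹ ^ (D.card - 1))
          fun _ hp => Nat.prime_of_mem_primesLE hp
    _ = _ := prod_pow _ _ _

/-- The singular series bound `𝔖(D) ≪_k (log h)^{k-1}` (equation (42)):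
for each `k` there is a constant `C` such that for every `h ≥ 2` and every set
`D` of `k` distinct integers contained in `[1, h]`, the singular series
`∏_p (1-1/p)^{-k} (1 - ν_p(D)/p)` is at most `C (log h)^{k-1}` in absolute value. -/
theorem stmt_6 (k : ℕ) :
    ∃ C : ℝ, ∀ h : ℕ, 2 ≤ h → ∀ D : Finset ℤ, D.card = k →
      (∀ d ∈ D, 1 ≤ d ∧ d ≤ (h : ℤ)) →
      |∏' p : Nat.Primes, (1 - ((p : ℕ) : ℝ)⁻¹)⁻¹ ^ k *
          (1 - ((D.image fun d : ℤ => (d : ZMod (p : ℕ))).card : ℝ) / ((p : ℕ) : ℝ))| ≤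
        C * Real.log h ^ (k - 1) := by
  refine ⟨(exp 4 / log 2) ^ (k - 1), fun h hh D hcard hD => ?_⟩
  subst hcard
  change |∏' p : Nat.Primes, eulerFactor D p| ≤ _
  have hlog2 : 0 < log 2 := log_pos one_lt_two
  have hbound : 1 ≤ exp 4 / log 2 * log h := by
    have : log 2 ≤ log h := log_le_log two_pos (by exact_mod_cast hh)
    calc 1 ≤ 1 / log 2 * log h := by rw [one_div_mul_eq_div, le_div_iff₀ hlog2]; linarith
      _ ≤ exp 4 / log 2 * log h := by gcongr; exact one_le_exp (by norm_num)
  have hmertens : (∏ p ∈ Nat.primesLE h, (1 - (p : ℝ)⁻¹)⁻¹) ^ (D.card - 1) ≤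
      (exp 4 / log 2 * log h) ^ (D.card - 1) :=
    pow_le_pow_left₀ (prod_nonneg fun p hp => zero_le_one.trans
      (one_le_inv_one_sub_inv (Nat.prime_of_mem_primesLE hp).one_lt))
      (prod_primesLE_inv_one_sub_inv_le hh) _
  rw [abs_of_nonneg (tprod_nonneg fun p => eulerFactor_nonneg p.prop.ne_zero), ← mul_pow]
  -- This also covers a divergent product, whose junk value `1` lies below the bound.
  exact tprod_le_of_prod_le' (one_le_pow₀ hbound) fun s =>
    (prod_eulerFactor_le hD s).trans hmertens
end

section
/- For squarefree q > 1, V_2(q;h) := ∑_{d|q, d>1} μ(d)²/φ(d)² ∑_{a: 1≤a≤d, gcd(a,d)=1} |E(a/d)|² satisfies V_2(q;h) = O(h · q/φ(q)), where E(α) = ∑_{m=1}^h e(mα). -/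
/-!
Expanding `|E(a/d)|²` and using orthogonality of the additive characters of `ℤ/dℤ` gives
`∑_{a mod d} |E(a/d)|² = d · #{(m, n) ∈ [1, h]² : m ≡ n (mod d)} ≤ h² + h d`; the term `a = 0`
is `h²`, so the reduced residues contribute at most `h d`. Hence `V₂(q;h) ≤ h ∑_{d ∣ q} d/φ(d)²`,
and for squarefree `q` this divisor sum factors as
`∏_{p ∣ q} (1 + 1/(p(p-1))) · q/φ(q) ≤ e² · q/φ(q)`.
-/

open Finset

theorem Nat.card_Ioc_filter_modEq_le {a b : ℕ} (hab : a ≤ b) (v : ℕ) {d : ℕ} (hd : 0 < d) :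
    (#{n ∈ Ioc a b | n ≡ v [MOD d]} : ℝ) ≤ (b - a) / d + 1 := by
  have hfloor : ⌊((b : ℚ) - v) / d⌋ - ⌊((a : ℚ) - v) / d⌋ ≤ ((b : ℚ) - a) / d + 1 := by
    have h1 := Int.floor_le (((b : ℚ) - v) / d)
    have h2 := Int.lt_floor_add_one (((a : ℚ) - v) / d)
    have : ((b : ℚ) - v) / d - ((a : ℚ) - v) / d = ((b : ℚ) - a) / d := by ring
    linarith
  have hq : ((#{n ∈ Ioc a b | n ≡ v [MOD d]} : ℤ) : ℚ) ≤ ((b : ℚ) - a) / d + 1 := by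
    have : (0 : ℚ) ≤ ((b : ℚ) - a) / d := div_nonneg (by simpa) (by positivity)
    rw [Nat.Ioc_filter_modEq_card a b hd v, Int.cast_max, Int.cast_sub, Int.cast_zero, max_le_iff]
    exact ⟨hfloor, by linarith⟩
  have hr := (Rat.cast_le (K := ℝ)).mpr hq
  push_cast at hr
  exact hr

namespace ZMod

variable {N : ℕ} [NeZero N]

theorem sum_norm_sq_sum_stdAddChar_mul {ι : Type*} (s : Finset ι) (x : ι → ZMod N) :
    ∑ a : ZMod N, ‖∑ i ∈ s, stdAddChar (x i * a)‖ ^ 2 =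
      N * #{p ∈ s ×ˢ s | x p.1 = x p.2} := by
  have hexpand (a : ZMod N) : (‖∑ i ∈ s, stdAddChar (x i * a)‖ : ℂ) ^ 2 =
      ∑ p ∈ s ×ˢ s, stdAddChar (a * (x p.1 - x p.2)) := by
    rw [← Complex.mul_conj', map_sum, sum_mul_sum, sum_product]
    refine sum_congr rfl fun i _ => sum_congr rfl fun j _ => ?_
    rw [← AddChar.map_neg_eq_conj, ← AddChar.map_add_eq_mul]
    ring_nf
  apply Complex.ofReal_injective
  push_cast
  simp_rw [hexpand]
  rw [sum_comm, card_filter, Nat.cast_sum, mul_sum]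
  refine sum_congr rfl fun p _ => ?_
  rw [AddChar.sum_mulShift _ (isPrimitive_stdAddChar N)]
  simp [sub_eq_zero]

theorem card_Icc_filter_natCast_eq_le (h : ℕ) :
    (#{p ∈ (Icc 1 h ×ˢ Icc 1 h : Finset (ℕ × ℕ)) | (p.1 : ZMod N) = p.2} : ℝ) ≤
      h * (h / N + 1) := by
  have hfiber (m : ℕ) : (#{n ∈ Icc 1 h | (m : ZMod N) = (n : ℕ)} : ℝ) ≤ h / N + 1 := by
    have hIcc : Icc 1 h = Ioc 0 h := Icc_add_one_left_eq_Ioc 0 h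
    rw [hIcc]
    simp_rw [eq_comm (a := (m : ZMod N)), natCast_eq_natCast_iff]
    simpa using Nat.card_Ioc_filter_modEq_le h.zero_le m (NeZero.pos N)
  rw [card_filter, sum_product]
  simp_rw [← card_filter]
  push_cast
  calc _ ≤ ∑ _m ∈ Icc 1 h, ((h : ℝ) / N + 1) := sum_le_sum fun m _ => hfiber m
    _ = h * (h / N + 1) := by simp [mul_add]

theorem sum_erase_zero_norm_sq_sum_stdAddChar_le (h : ℕ) :
    ∑ a ∈ univ.erase (0 : ZMod N), ‖∑ m ∈ Icc 1 h, stdAddChar ((m : ZMod N) * a)‖ ^ 2 ≤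
      h * N := by
  have htotal := sum_norm_sq_sum_stdAddChar_mul (Icc 1 h) (fun m : ℕ => (m : ZMod N))
  have hcount := card_Icc_filter_natCast_eq_le (N := N) h
  have hN : (0 : ℝ) < N := by exact_mod_cast NeZero.pos N
  rw [← add_sum_erase _ _ (mem_univ 0)] at htotal
  simp only [mul_zero, AddChar.map_zero_eq_one, sum_const, Nat.card_Icc, add_tsub_cancel_right,
    nsmul_eq_mul, mul_one, Complex.norm_natCast] at htotal
  have : (N : ℝ) * (h * (h / N + 1)) = h ^ 2 + h * N := by field_simp
  nlinarith

end ZMod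

theorem sum_Ico_norm_sq_sum_exp_le (d h : ℕ) :
    ∑ a ∈ Ico 1 d, ‖∑ m ∈ Icc 1 h,
      Complex.exp (2 * Real.pi * Complex.I * (m : ℂ) * (a : ℂ) / (d : ℂ))‖ ^ 2 ≤ h * d := by
  rcases Nat.eq_zero_or_pos d with rfl | hd
  · simp
  have : NeZero d := ⟨hd.ne'⟩
  have hexp (m a : ℕ) : Complex.exp (2 * Real.pi * Complex.I * (m : ℂ) * (a : ℂ) / (d : ℂ)) =
      ZMod.stdAddChar ((m : ZMod d) * (a : ZMod d)) := by
    rw [← Nat.cast_mul, ZMod.stdAddChar_apply, ZMod.toCircle_natCast]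
    push_cast
    ring_nf
  have hinj : Set.InjOn (fun a : ℕ => (a : ZMod d)) (Ico 1 d) := by
    intro a ha b hb hab
    simp only [coe_Ico, Set.mem_Ico] at ha hb
    simpa [ZMod.natCast_eq_natCast_iff', Nat.mod_eq_of_lt ha.2, Nat.mod_eq_of_lt hb.2] using hab
  have himage : (Ico 1 d).image (fun a : ℕ => (a : ZMod d)) ⊆ univ.erase 0 := by
    intro x hx
    obtain ⟨a, ha, rfl⟩ := mem_image.mp hx
    simp only [mem_Ico] at ha
    simp only [mem_erase, ne_eq, ZMod.natCast_eq_zero_iff, mem_univ, and_true]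
    exact fun hdvd => Nat.one_le_iff_ne_zero.mp ha.1 (Nat.eq_zero_of_dvd_of_lt hdvd ha.2)
  simp_rw [hexp]
  calc _ = ∑ x ∈ (Ico 1 d).image (fun a : ℕ => (a : ZMod d)),
        ‖∑ m ∈ Icc 1 h, ZMod.stdAddChar ((m : ZMod d) * x)‖ ^ 2 := (sum_image hinj).symm
    _ ≤ _ := sum_le_sum_of_subset_of_nonneg himage fun _ _ _ => by positivity
    _ ≤ _ := ZMod.sum_erase_zero_norm_sq_sum_stdAddChar_le h

namespace ArithmeticFunction

noncomputable def natDivTotientSq : ArithmeticFunction ℝ :=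
  ⟨fun n => n / (n.totient : ℝ) ^ 2, by simp⟩

theorem natDivTotientSq_apply (n : ℕ) : natDivTotientSq n = n / (n.totient : ℝ) ^ 2 := rfl

theorem isMultiplicative_natDivTotientSq : IsMultiplicative natDivTotientSq := by
  rw [IsMultiplicative.iff_ne_zero]
  refine ⟨by simp [natDivTotientSq_apply], fun {m n} _ _ hmn => ?_⟩
  simp only [natDivTotientSq_apply, Nat.totient_mul hmn]
  push_cast
  rw [mul_pow, mul_div_mul_comm]

end ArithmeticFunction

theorem Nat.div_totient_eq_prod_primeFactors {n : ℕ} (hn : n ≠ 0) :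
    (n : ℝ) / n.totient = ∏ p ∈ n.primeFactors, (1 - (p : ℝ)⁻¹)⁻¹ := by
  have h := congrArg (Rat.cast : ℚ → ℝ) (Nat.totient_eq_mul_prod_factors n)
  push_cast at h
  have hn' : (n : ℝ) ≠ 0 := by exact_mod_cast hn
  rw [h, prod_inv_distrib, div_mul_cancel_left₀ hn']

theorem Nat.sum_divisors_div_totient_sq_of_squarefree {q : ℕ} (hq : Squarefree q) :
    ∑ d ∈ q.divisors, (d : ℝ) / (d.totient : ℝ) ^ 2 =
      (∏ p ∈ q.primeFactors, (1 + 1 / ((p : ℝ) * (p - 1)))) * (q / q.totient) := by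
  rw [div_totient_eq_prod_primeFactors hq.ne_zero, ← prod_mul_distrib]
  simp_rw [← ArithmeticFunction.natDivTotientSq_apply,
    ← ArithmeticFunction.isMultiplicative_natDivTotientSq.prodPrimeFactors_one_add_of_squarefree hq]
  refine prod_congr rfl fun p hp => ?_
  have hp := Nat.prime_of_mem_primeFactors hp
  have h2 : (2 : ℝ) ≤ p := by exact_mod_cast hp.two_le
  rw [ArithmeticFunction.natDivTotientSq_apply, Nat.totient_prime hp, Nat.cast_sub hp.one_le,
    Nat.cast_one]
  have : (p : ℝ) - 1 ≠ 0 := by linarith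
  field_simp
  ring

theorem one_div_mul_sub_one_nonneg (n : ℕ) : 0 ≤ 1 / ((n : ℝ) * (n - 1)) := by
  rcases n with _ | n
  · simp
  · rw [Nat.cast_succ, add_sub_cancel_right]
    positivity

theorem prod_one_add_one_div_mul_sub_one_le_exp_two (s : Finset ℕ) (hs : ∀ p ∈ s, 2 ≤ p) :
    ∏ p ∈ s, (1 + 1 / ((p : ℝ) * (p - 1))) ≤ Real.exp 2 := by
  refine (Real.prod_one_add_le_exp_sum s one_div_mul_sub_one_nonneg).trans (Real.exp_le_exp.mpr ?_)
  have hterm : ∀ p ∈ s, 1 / ((p : ℝ) * (p - 1)) ≤ 2 * ((p : ℝ) ^ 2)⁻¹ := by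
    intro p hp
    have h2 : (2 : ℝ) ≤ p := by exact_mod_cast hs p hp
    rw [div_le_iff₀ (by nlinarith)]
    field_simp
    nlinarith
  have hsub : s ⊆ Ioo 1 (s.sup id + 1) := fun p hp =>
    mem_Ioo.mpr ⟨hs p hp, Nat.lt_succ_of_le (le_sup (f := id) hp)⟩
  calc ∑ p ∈ s, 1 / ((p : ℝ) * (p - 1)) ≤ 2 * ∑ p ∈ s, ((p : ℝ) ^ 2)⁻¹ := by
        rw [mul_sum]; exact sum_le_sum hterm
    _ ≤ 2 * ∑ i ∈ Ioo 1 (s.sup id + 1), ((i : ℝ) ^ 2)⁻¹ := by gcongr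
    _ ≤ 2 * (2 / (1 + 1)) := by gcongr; exact_mod_cast sum_Ioo_inv_sq_le 1 _
    _ = 2 := by norm_num

theorem sum_coprime_norm_sq_sum_exp_le {d : ℕ} (hd : 1 < d) (h : ℕ) :
    ∑ a ∈ (Icc 1 d).filter (fun a => Nat.gcd a d = 1), ‖∑ m ∈ Icc 1 h,
      Complex.exp (2 * Real.pi * Complex.I * (m : ℂ) * (a : ℂ) / (d : ℂ))‖ ^ 2 ≤ h * d := by
  have hsub : (Icc 1 d).filter (fun a => Nat.gcd a d = 1) ⊆ Ico 1 d := by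
    intro a ha
    simp only [mem_filter, mem_Icc] at ha
    refine mem_Ico.mpr ⟨ha.1.1, lt_of_le_of_ne ha.1.2 ?_⟩
    rintro rfl
    rw [Nat.gcd_self] at ha
    exact hd.ne' ha.2
  exact (sum_le_sum_of_subset_of_nonneg hsub fun _ _ _ => by positivity).trans
    (sum_Ico_norm_sq_sum_exp_le d h)

/-- `V₂(q;h) ≪ h q/φ(q)` where
`V₂(q;h) = ∑_{d∣q, d>1} μ(d)²/φ(d)² ∑_{(a,d)=1} |E(a/d)|²`. -/
theorem stmt_13 :
    ∃ C : ℝ, ∀ q h : ℕ, Squarefree q → 1 < q → 0 < h →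
      ∑ d ∈ q.divisors.filter (fun d => 1 < d),
        (((ArithmeticFunction.moebius d : ℤ) : ℝ) ^ 2 / (Nat.totient d : ℝ) ^ 2) *
          ∑ a ∈ (Finset.Icc 1 d).filter (fun a => Nat.gcd a d = 1),
            ‖∑ m ∈ Finset.Icc 1 h,
              Complex.exp (2 * Real.pi * Complex.I * (m : ℂ) * (a : ℂ) / (d : ℂ))‖ ^ 2 ≤
      C * (h : ℝ) * (q : ℝ) / (Nat.totient q : ℝ) := by
  refine ⟨Real.exp 2, fun q h hq _ _ => ?_⟩
  have hterm : ∀ d ∈ q.divisors.filter (fun d => 1 < d),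
      (((ArithmeticFunction.moebius d : ℤ) : ℝ) ^ 2 / (Nat.totient d : ℝ) ^ 2) *
        ∑ a ∈ (Icc 1 d).filter (fun a => Nat.gcd a d = 1), ‖∑ m ∈ Icc 1 h,
          Complex.exp (2 * Real.pi * Complex.I * (m : ℂ) * (a : ℂ) / (d : ℂ))‖ ^ 2 ≤
        h * ((d : ℝ) / (Nat.totient d : ℝ) ^ 2) := by
    intro d hd
    have hμ : ((ArithmeticFunction.moebius d : ℤ) : ℝ) ^ 2 ≤ 1 :=
      (sq_le_one_iff_abs_le_one _).mpr (by exact_mod_cast ArithmeticFunction.abs_moebius_le_one)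
    calc _ ≤ 1 / (Nat.totient d : ℝ) ^ 2 * (h * d) := by
          gcongr
          exact sum_coprime_norm_sq_sum_exp_le (mem_filter.mp hd).2 h
      _ = _ := by ring
  calc _ ≤ ∑ d ∈ q.divisors.filter (fun d => 1 < d), h * ((d : ℝ) / (Nat.totient d : ℝ) ^ 2) :=
        sum_le_sum hterm
    _ ≤ ∑ d ∈ q.divisors, h * ((d : ℝ) / (Nat.totient d : ℝ) ^ 2) :=
        sum_le_sum_of_subset_of_nonneg (filter_subset _ _) fun _ _ _ => by positivity
    _ = h * ((∏ p ∈ q.primeFactors, (1 + 1 / ((p : ℝ) * (p - 1)))) * (q / q.totient)) := by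
        rw [← mul_sum, Nat.sum_divisors_div_totient_sq_of_squarefree hq]
    _ ≤ h * (Real.exp 2 * (q / q.totient)) := by
        gcongr
        exact prod_one_add_one_div_mul_sub_one_le_exp_two _
          fun p hp => (Nat.prime_of_mem_primeFactors hp).two_le
    _ = _ := by ring
end
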